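/- arXiv:2005.05296 — 12 statements merged into one kernel-verified Lean document; each statement's English description precedes it below -/
import Mathlib

section
/- Let G be an oligomorphic group of permutations of a set E and H an oligomorphic group of permutations of a set F. Let the product group G × H act on the disjoint union E ⊕ F by (g,h)·(Sum.inl e) = Sum.inl (g e) and (g,h)·(Sum.inr f) = Sum.inr (h f). Then for every natural number n, the profile of this action satisfies φ_{G×H}(n) = Σ_{k=0}^{n} φ_G(k) · φ_H(n−k). -/
/-- The orbit setoid of a permutation group `G ≤ Perm E` acting on the
`n`-element finite subsets of `E`. -/
def permSetoid {E : Type*} (G : Subgroup (Equiv.Perm E)) (n : ℕ) :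
    Setoid {s : Set E // s.Finite ∧ s.ncard = n} where
  r s t := ∃ g ∈ G, g '' s.1 = t.1
  iseqv := by
    constructor
    · exact fun s => ⟨1, G.one_mem, by simp⟩
    · rintro s t ⟨g, hg, h⟩
      refine ⟨g⁻¹, G.inv_mem hg, ?_⟩
      rw [← h, ← Set.image_comp]
      ext x; simp
    · rintro s t u ⟨g, hg, h⟩ ⟨g', hg', h'⟩
      refine ⟨g' * g, G.mul_mem hg' hg, ?_⟩
      rw [← h', ← h, ← Set.image_comp]
      ext x; simp

/-- The profile of a permutation group: the number of orbits of `n`-element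
finite subsets. -/
noncomputable def profile {E : Type*} (G : Subgroup (Equiv.Perm E)) (n : ℕ) : ℕ :=
  Nat.card (Quotient (permSetoid G n))

section Aux

variable {E F : Type*} (G : Subgroup (Equiv.Perm E)) (H : Subgroup (Equiv.Perm F))

private lemma preimage_inl_image (g : Equiv.Perm E) (h : Equiv.Perm F) (s : Set (E ⊕ F)) :
    Sum.inl ⁻¹' ((Equiv.sumCongr g h) '' s) = g '' (Sum.inl ⁻¹' s) := by
  ext x
  constructor
  · rintro ⟨y, hy, hxy⟩
    cases y with
    | inl a => exact ⟨a, hy, by simpa using hxy⟩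
    | inr b => simp at hxy
  · rintro ⟨a, ha, rfl⟩
    exact ⟨Sum.inl a, ha, rfl⟩

private lemma preimage_inr_image (g : Equiv.Perm E) (h : Equiv.Perm F) (s : Set (E ⊕ F)) :
    Sum.inr ⁻¹' ((Equiv.sumCongr g h) '' s) = h '' (Sum.inr ⁻¹' s) := by
  ext x
  constructor
  · rintro ⟨y, hy, hxy⟩
    cases y with
    | inl a => simp at hxy
    | inr b => exact ⟨b, hy, by simpa using hxy⟩
  · rintro ⟨b, hb, rfl⟩
    exact ⟨Sum.inr b, hb, rfl⟩

private lemma image_inl_sumCongr (g : Equiv.Perm E) (h : Equiv.Perm F) (A : Set E) :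
    (Equiv.sumCongr g h) '' (Sum.inl '' A) = Sum.inl '' (g '' A) := by
  rw [← Set.image_comp, ← Set.image_comp]
  rfl

private lemma image_inr_sumCongr (g : Equiv.Perm E) (h : Equiv.Perm F) (B : Set F) :
    (Equiv.sumCongr g h) '' (Sum.inr '' B) = Sum.inr '' (h '' B) := by
  rw [← Set.image_comp, ← Set.image_comp]
  rfl

private lemma disjoint_inl_inr (A : Set E) (B : Set F) :
    Disjoint (Sum.inl '' A : Set (E ⊕ F)) (Sum.inr '' B) := by
  rw [Set.disjoint_left]
  rintro x ⟨a, _, rfl⟩ ⟨b, _, hb⟩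
  simp at hb

private lemma ncard_union_inl_inr {A : Set E} {B : Set F} (hA : A.Finite) (hB : B.Finite) :
    (Sum.inl '' A ∪ Sum.inr '' B : Set (E ⊕ F)).ncard = A.ncard + B.ncard := by
  rw [Set.ncard_union_eq (disjoint_inl_inr A B) (hA.image _) (hB.image _),
    Set.ncard_image_of_injective _ Sum.inl_injective,
    Set.ncard_image_of_injective _ Sum.inr_injective]

private lemma ncard_decomp {s : Set (E ⊕ F)} (hs : s.Finite) :
    (Sum.inl ⁻¹' s).ncard + (Sum.inr ⁻¹' s).ncard = s.ncard := by
  have hA : (Sum.inl ⁻¹' s).Finite := hs.preimage Sum.inl_injective.injOn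
  have hB : (Sum.inr ⁻¹' s).Finite := hs.preimage Sum.inr_injective.injOn
  rw [← ncard_union_inl_inr hA hB, Set.image_preimage_inl_union_image_preimage_inr]

variable {n : ℕ}

private lemma mk_eq_mk {k k' : ℕ} (hkn : k < n + 1) (hk'n : k' < n + 1) (hk : k = k')
    (A : {s : Set E // s.Finite ∧ s.ncard = k}) (A' : {s : Set E // s.Finite ∧ s.ncard = k'})
    (B : {s : Set F // s.Finite ∧ s.ncard = n - k}) (B' : {s : Set F // s.Finite ∧ s.ncard = n - k'})
    (hA : ∃ g ∈ G, g '' A.1 = A'.1) (hB : ∃ h ∈ H, h '' B.1 = B'.1) :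
    (⟨⟨k, hkn⟩, ⟦A⟧, ⟦B⟧⟩ :
        Σ k : Fin (n + 1), Quotient (permSetoid G k) × Quotient (permSetoid H (n - k))) =
      ⟨⟨k', hk'n⟩, ⟦A'⟧, ⟦B'⟧⟩ := by
  subst hk
  exact congrArg (Sigma.mk _) (Prod.ext (Quotient.sound hA) (Quotient.sound hB))

/-- Forward map: decompose an orbit of subsets of `E ⊕ F`. -/
noncomputable def fwd (G : Subgroup (Equiv.Perm E)) (H : Subgroup (Equiv.Perm F)) (n : ℕ) :
    Quotient (permSetoid (Subgroup.map (Equiv.Perm.sumCongrHom E F) (G.prod H)) n) →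
      Σ k : Fin (n + 1), Quotient (permSetoid G k) × Quotient (permSetoid H (n - k)) :=
  Quotient.lift
    (fun s =>
      ⟨⟨(Sum.inl ⁻¹' s.1).ncard, by
          have := ncard_decomp s.2.1
          omega⟩,
        ⟦⟨Sum.inl ⁻¹' s.1, s.2.1.preimage Sum.inl_injective.injOn, rfl⟩⟧,
        ⟦⟨Sum.inr ⁻¹' s.1, s.2.1.preimage Sum.inr_injective.injOn, by
          show _ = n - (Sum.inl ⁻¹' s.1).ncard
          have := ncard_decomp s.2.1
          have h2 := s.2.2
          omega⟩⟧⟩)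
    (by
      rintro s t ⟨p, hp, hst⟩
      obtain ⟨⟨g, h⟩, hgh, rfl⟩ := Subgroup.mem_map.mp hp
      obtain ⟨hg, hh⟩ := Subgroup.mem_prod.mp hgh
      have hAl : Sum.inl ⁻¹' t.1 = g '' (Sum.inl ⁻¹' s.1) := by
        rw [← hst]; exact preimage_inl_image g h s.1
      have hBr : Sum.inr ⁻¹' t.1 = h '' (Sum.inr ⁻¹' s.1) := by
        rw [← hst]; exact preimage_inr_image g h s.1
      have hk : (Sum.inl ⁻¹' s.1).ncard = (Sum.inl ⁻¹' t.1).ncard := by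
        rw [hAl, Set.ncard_image_of_injective _ g.injective]
      exact mk_eq_mk G H _ _ hk _ _ _ _ ⟨g, hg, hAl.symm⟩ ⟨h, hh, hBr.symm⟩)

/-- Backward map: recombine orbits. -/
noncomputable def bwd (G : Subgroup (Equiv.Perm E)) (H : Subgroup (Equiv.Perm F)) (n : ℕ)
    (k : Fin (n + 1)) :
    Quotient (permSetoid G k) × Quotient (permSetoid H (n - k)) →
      Quotient (permSetoid (Subgroup.map (Equiv.Perm.sumCongrHom E F) (G.prod H)) n) :=
  fun p =>
    Quotient.lift₂
      (fun A B =>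
        ⟦⟨Sum.inl '' A.1 ∪ Sum.inr '' B.1,
          (A.2.1.image _).union (B.2.1.image _), by
            rw [ncard_union_inl_inr A.2.1 B.2.1, A.2.2, B.2.2]
            omega⟩⟧)
      (by
        rintro A B A' B' ⟨g, hg, hA⟩ ⟨h, hh, hB⟩
        apply Quotient.sound
        refine ⟨Equiv.Perm.sumCongrHom E F (g, h),
          Subgroup.mem_map.mpr ⟨(g, h), Subgroup.mem_prod.mpr ⟨hg, hh⟩, rfl⟩, ?_⟩
        show (Equiv.sumCongr g h) '' _ = _
        rw [Set.image_union, image_inl_sumCongr, image_inr_sumCongr, hA, hB])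
      p.1 p.2

/-- The orbit equivalence underlying the convolution formula. -/
noncomputable def equivSigma (G : Subgroup (Equiv.Perm E)) (H : Subgroup (Equiv.Perm F)) (n : ℕ) :
    Quotient (permSetoid (Subgroup.map (Equiv.Perm.sumCongrHom E F) (G.prod H)) n) ≃
      Σ k : Fin (n + 1), Quotient (permSetoid G k) × Quotient (permSetoid H (n - k)) where
  toFun := fwd G H n
  invFun := fun x => bwd G H n x.1 x.2
  left_inv := by
    intro q
    induction q using Quotient.inductionOn with
    | h s =>
      apply Quotient.sound
      refine ⟨1, Subgroup.one_mem _, ?_⟩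
      simpa using Set.image_preimage_inl_union_image_preimage_inr s.1
  right_inv := by
    rintro ⟨k, qA, qB⟩
    obtain ⟨A, rfl⟩ := Quotient.exists_rep qA
    obtain ⟨B, rfl⟩ := Quotient.exists_rep qB
    have hA : Sum.inl ⁻¹' (Sum.inl '' A.1 ∪ Sum.inr '' B.1) = A.1 := by
      ext x; simp
    have hB : Sum.inr ⁻¹' (Sum.inl '' A.1 ∪ Sum.inr '' B.1) = B.1 := by
      ext x; simp
    have hk : (Sum.inl ⁻¹' (Sum.inl '' A.1 ∪ Sum.inr '' B.1)).ncard = (k : ℕ) := by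
      rw [hA, A.2.2]
    exact mk_eq_mk G H _ k.isLt hk _ _ _ _
      ⟨1, Subgroup.one_mem _, by simpa using hA⟩
      ⟨1, Subgroup.one_mem _, by simpa using hB⟩

end Aux

/-- If `G` and `H` are oligomorphic permutation groups of `E` and `F`
respectively, then the profile of the product group `G × H`, acting on the
disjoint union `E ⊕ F` (via `Equiv.sumCongr`, i.e. `(g, h) • inl e = inl (g e)`
and `(g, h) • inr f = inr (h f)`), is the convolution of the profiles of `G`
and `H`: `φ_{G×H}(n) = ∑_{k=0}^{n} φ_G(k) ⬝ φ_H(n-k)`. -/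
theorem profile_prod_sum {E F : Type*}
    (G : Subgroup (Equiv.Perm E)) (H : Subgroup (Equiv.Perm F))
    (hG : ∀ n, Finite (Quotient (permSetoid G n)))
    (hH : ∀ n, Finite (Quotient (permSetoid H n))) :
    ∀ n : ℕ,
      profile (Subgroup.map (Equiv.Perm.sumCongrHom E F) (G.prod H)) n =
        ∑ k ∈ Finset.range (n + 1), profile G k * profile H (n - k) := by
  intro n
  classical
  haveI instG : ∀ m, Fintype (Quotient (permSetoid G m)) := fun m =>
    @Fintype.ofFinite _ (hG m)
  haveI instH : ∀ m, Fintype (Quotient (permSetoid H m)) := fun m =>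
    @Fintype.ofFinite _ (hH m)
  rw [profile, Nat.card_congr (equivSigma G H n), Nat.card_eq_fintype_card,
    Fintype.card_sigma]
  rw [Fin.sum_univ_eq_sum_range
    (fun k => Fintype.card (Quotient (permSetoid G k) × Quotient (permSetoid H (n - k))))]
  refine Finset.sum_congr rfl fun k hk => ?_
  rw [← Nat.card_eq_fintype_card, Nat.card_prod, profile, profile]
end

section
/- Let α be a finite type with at least two elements and let G be a subgroup of the permutations of α × ℚ such that every g ∈ G permutes the blocks α × {q} in an order-preserving way: for each g ∈ G there is a strictly monotone increasing map ḡ : ℚ → ℚ with (g (a, q)).2 = ḡ q for all a ∈ α and q ∈ ℚ. Then for every m ≥ 1 there exists a collection of at least 2^m finite subsets of α × ℚ, each of cardinality at least m and at most 2m, lying pairwise in distinct G-orbits. In particular, G is not P-oligomorphic. -/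
open Filter

lemma strictMono_fix {f : ℚ → ℚ} (hf : StrictMono f) :
    ∀ s : Finset ℚ, f '' ↑s = ↑s → ∀ x ∈ s, f x = x := by
  intro s
  induction s using Finset.strongInduction with
  | _ s ih =>
    intro h x hx
    have hne : s.Nonempty := ⟨x, hx⟩
    set x0 := s.min' hne with hx0
    have hmem : f x0 ∈ s := by
      have : f x0 ∈ f '' ↑s := ⟨x0, s.min'_mem hne, rfl⟩
      rwa [h] at this
    have hfix : f x0 = x0 := by
      refine le_antisymm ?_ (s.min'_le _ hmem)
      obtain ⟨z, hz, hz'⟩ : x0 ∈ f '' ↑s := by rw [h]; exact_mod_cast s.min'_mem hne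
      calc f x0 ≤ f z := hf.monotone (s.min'_le _ hz)
        _ = x0 := hz'
    rcases eq_or_ne x x0 with rfl | hxne
    · exact hfix
    · refine ih (s.erase x0) (s.erase_ssubset (s.min'_mem hne)) ?_ x
        (Finset.mem_erase.2 ⟨hxne, hx⟩)
      have : (↑(s.erase x0) : Set ℚ) = ↑s \ {x0} := by simp [Finset.coe_erase]
      rw [this, Set.image_diff hf.injective, h, Set.image_singleton, hfix]

lemma exists_pow_gt (C K : ℕ) : ∃ m : ℕ, 1 ≤ m ∧ C * m ^ K < 2 ^ m := by
  have h := isLittleO_pow_const_const_pow_of_one_lt (R := ℝ) K (by norm_num : (1:ℝ) < 2)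
  have hb := h.bound (c := 1 / (C + 1)) (by positivity)
  rw [Filter.eventually_atTop] at hb
  obtain ⟨N, hN⟩ := hb
  refine ⟨max N 1, le_max_right _ _, ?_⟩
  have h1 := hN (max N 1) (le_max_left _ _)
  have h2 : (0:ℝ) < 2 ^ (max N 1) := by positivity
  have h3 : ((max N 1 : ℕ) : ℝ) ^ K ≤ 1 / (C + 1) * 2 ^ (max N 1) := by
    simpa [abs_of_nonneg, h2.le] using h1
  have h4 : (C : ℝ) * ((max N 1 : ℕ) : ℝ) ^ K < 2 ^ (max N 1) := by
    have hC : (C : ℝ) < C + 1 := by linarith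
    calc (C : ℝ) * ((max N 1 : ℕ) : ℝ) ^ K ≤ (C : ℝ) * (1 / (C + 1) * 2 ^ (max N 1)) := by
          apply mul_le_mul_of_nonneg_left h3 (by positivity)
      _ < 2 ^ (max N 1) := by
          rw [← mul_assoc]
          have : (C : ℝ) * (1 / (C + 1)) < 1 := by
            rw [mul_one_div, div_lt_one (by positivity)]; exact hC
          nlinarith
  exact_mod_cast h4


set_option maxHeartbeats 1000000 in
/-- If `α` is finite with at least two elements and `G ≤ Perm (α × ℚ)`
permutes the blocks `α × {q}` in an order-preserving way, then for every
`m ≥ 1` there are at least `2^m` finite subsets, of cardinalities between `m`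
and `2m`, lying pairwise in distinct `G`-orbits; in particular `G` is not
P-oligomorphic. -/
theorem not_P_oligomorphic_of_orderPreserving_blocks
    (α : Type*) [Finite α] (hα : 1 < Nat.card α)
    (G : Subgroup (Equiv.Perm (α × ℚ)))
    (hblocks : ∀ g ∈ G, ∃ f : ℚ → ℚ, StrictMono f ∧
      ∀ (a : α) (q : ℚ), (g (a, q)).2 = f q) :
    (∀ m : ℕ, 1 ≤ m → ∃ T : Finset (Set (α × ℚ)),
      2 ^ m ≤ T.card ∧
      (∀ s ∈ T, s.Finite ∧ m ≤ s.ncard ∧ s.ncard ≤ 2 * m) ∧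
      (∀ s ∈ T, ∀ t ∈ T, s ≠ t → ¬ ∃ g ∈ G, g '' s = t)) ∧
    ¬ ((∀ n, Finite (Quotient (permSetoid G n))) ∧
        ∃ c k : ℕ, ∀ n, profile G n ≤ c * (n + 1) ^ k) := by
  classical
  have : Nontrivial α := Finite.one_lt_card_iff_nontrivial.mp hα
  haveI : Fintype α := Fintype.ofFinite α
  obtain ⟨a0, a1, hne⟩ := exists_pair_ne α
  have main : ∀ m : ℕ, 1 ≤ m → ∃ T : Finset (Set (α × ℚ)),
      2 ^ m ≤ T.card ∧
      (∀ s ∈ T, s.Finite ∧ m ≤ s.ncard ∧ s.ncard ≤ 2 * m) ∧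
      (∀ s ∈ T, ∀ t ∈ T, s ≠ t → ¬ ∃ g ∈ G, g '' s = t) := by
    intro m hm
    set blk : Bool → Finset α := fun b => if b then {a0, a1} else {a0} with hblkdef
    have blkcard : ∀ b, (blk b).card = if b then 2 else 1 := by
      intro b; cases b <;> simp [blk, hne]
    have ha0 : ∀ b, a0 ∈ blk b := by intro b; cases b <;> simp [blk]
    have ha1 : ∀ b, a1 ∈ blk b ↔ b = true := by
      intro b; cases b <;> simp [blk, hne.symm]
    set F : (Fin m → Bool) → Finset (α × ℚ) :=
      fun w => Finset.univ.biUnion fun i : Fin m => (blk (w i)) ×ˢ {((i : ℕ) : ℚ)} with hFdef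
    have hmemF : ∀ w (a : α) (q : ℚ),
        (a, q) ∈ F w ↔ ∃ i : Fin m, a ∈ blk (w i) ∧ q = ((i : ℕ) : ℚ) := by
      intro w a q
      constructor
      · intro h
        obtain ⟨i, -, hi⟩ := Finset.mem_biUnion.1 h
        rw [Finset.mem_product, Finset.mem_singleton] at hi
        exact ⟨i, hi.1, hi.2⟩
      · rintro ⟨i, hi, rfl⟩
        exact Finset.mem_biUnion.2 ⟨i, Finset.mem_univ _,
          Finset.mem_product.2 ⟨hi, Finset.mem_singleton_self _⟩⟩
    have hcast : ∀ i j : Fin m, ((i : ℕ) : ℚ) = ((j : ℕ) : ℚ) ↔ i = j := by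
      intro i j
      constructor
      · intro h; exact Fin.ext (by exact_mod_cast h)
      · rintro rfl; rfl
    have hFcard : ∀ w, m ≤ (F w).card ∧ (F w).card ≤ 2 * m := by
      intro w
      have hdisj : ∀ i ∈ (Finset.univ : Finset (Fin m)), ∀ j ∈ Finset.univ, i ≠ j →
          Disjoint ((blk (w i)) ×ˢ ({((i : ℕ) : ℚ)} : Finset ℚ)) ((blk (w j)) ×ˢ {((j : ℕ) : ℚ)}) := by
        intro i _ j _ hij
        rw [Finset.disjoint_left]
        rintro ⟨a, q⟩ h1 h2
        rw [Finset.mem_product] at h1 h2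
        exact hij ((hcast i j).mp ((Finset.mem_singleton.1 h1.2).symm.trans (Finset.mem_singleton.1 h2.2)))
      have hc : (F w).card = ∑ i : Fin m, (blk (w i)).card := by
        rw [hFdef, Finset.card_biUnion hdisj]
        exact Finset.sum_congr rfl fun i _ => by
          rw [Finset.card_product, Finset.card_singleton, mul_one]
      have hlow : ∀ i : Fin m, 1 ≤ (blk (w i)).card := by
        intro i; rw [blkcard]; cases w i <;> norm_num
      have hhigh : ∀ i : Fin m, (blk (w i)).card ≤ 2 := by
        intro i; rw [blkcard]; cases w i <;> norm_num
      constructor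
      · rw [hc]
        have := Finset.sum_le_sum (fun i (_ : i ∈ Finset.univ) => hlow i)
        simpa using this
      · rw [hc]
        have := Finset.sum_le_sum (fun i (_ : i ∈ Finset.univ) => hhigh i)
        simpa [mul_comm] using this
    have hinj : Function.Injective (fun w => (↑(F w) : Set (α × ℚ))) := by
      intro w w' h
      have hF : F w = F w' := Finset.coe_injective h
      funext i
      have e : ∀ w : Fin m → Bool, ((a1, ((i : ℕ) : ℚ)) ∈ F w) ↔ w i = true := by
        intro w
        rw [hmemF]
        constructor
        · rintro ⟨j, hj, hq⟩; rw [(hcast i j).mp hq]; exact (ha1 _).mp hj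
        · intro hh; exact ⟨i, (ha1 _).mpr hh, rfl⟩
      have h1 : w i = true ↔ w' i = true := (e w).symm.trans (by rw [hF]; exact e w')
      cases hwi : w i <;> cases hwi' : w' i
      · rfl
      · rw [hwi, hwi'] at h1; simp at h1
      · rw [hwi, hwi'] at h1; simp at h1
      · rfl
    refine ⟨Finset.image (fun w => (↑(F w) : Set (α × ℚ))) Finset.univ, ?_, ?_, ?_⟩
    · rw [Finset.card_image_of_injective _ hinj, Finset.card_univ]
      simp
    · intro s hs
      obtain ⟨w, _, rfl⟩ := Finset.mem_image.1 hs
      refine ⟨(F w).finite_toSet, ?_, ?_⟩ <;> rw [Set.ncard_coe_finset]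
      · exact (hFcard w).1
      · exact (hFcard w).2
    · intro s hs t ht hst ⟨g, hg, himg⟩
      obtain ⟨w, _, rfl⟩ := Finset.mem_image.1 hs
      obtain ⟨w', _, rfl⟩ := Finset.mem_image.1 ht
      obtain ⟨f, hfmono, hfsnd⟩ := hblocks g hg
      -- the set of block coordinates
      set Q : Finset ℚ := (Finset.range m).image (Nat.cast : ℕ → ℚ) with hQdef
      have hQmem : ∀ i : Fin m, ((i : ℕ) : ℚ) ∈ Q := by
        intro i; exact Finset.mem_image.2 ⟨i, Finset.mem_range.2 i.isLt, rfl⟩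
      have hproj : ∀ w, Prod.snd '' (↑(F w) : Set (α × ℚ)) = ↑Q := by
        intro w
        ext q
        constructor
        · rintro ⟨⟨a, q'⟩, hmem', rfl⟩
          obtain ⟨i, _, rfl⟩ := (hmemF w a q').1 hmem'
          exact Finset.mem_coe.2 (hQmem i)
        · intro hq
          obtain ⟨n, hn, rfl⟩ := Finset.mem_image.1 (Finset.mem_coe.1 hq)
          exact ⟨(a0, (n : ℚ)), (hmemF w a0 _).2 ⟨⟨n, Finset.mem_range.1 hn⟩, ha0 _, rfl⟩, rfl⟩
      have hcomp : Prod.snd ∘ (g : α × ℚ → α × ℚ) = f ∘ Prod.snd := by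
        funext p; obtain ⟨a, q⟩ := p; exact hfsnd a q
      have hfQ : f '' ↑Q = ↑Q := by
        calc f '' ↑Q = f '' (Prod.snd '' (↑(F w) : Set (α × ℚ))) := by rw [hproj]
          _ = Prod.snd '' ((g : α × ℚ → α × ℚ) '' ↑(F w)) := by
              rw [← Set.image_comp, ← Set.image_comp, hcomp]
          _ = Prod.snd '' (↑(F w') : Set (α × ℚ)) := by rw [himg]
          _ = ↑Q := hproj w'
      have hfix : ∀ i : Fin m, f ((i : ℕ) : ℚ) = ((i : ℕ) : ℚ) :=
        fun i => strictMono_fix hfmono Q hfQ _ (hQmem i)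
      -- compare fibers
      have hww' : w = w' := by
        funext i
        set qi : ℚ := ((i : ℕ) : ℚ) with hqi
        set φ : α → α := fun b => (g (b, qi)).1 with hφ
        have hgφ : ∀ b : α, g (b, qi) = (φ b, qi) := by
          intro b
          refine Prod.ext rfl ?_
          show (g (b, qi)).2 = qi
          rw [hfsnd b qi]; exact hfix i
        have hφinj : Function.Injective φ := by
          intro b b' hb
          have : g (b, qi) = g (b', qi) := by rw [hgφ, hgφ, hb]
          have := g.injective this
          exact (Prod.mk.injEq _ _ _ _).mp this |>.1
        have hfib : ∀ w, {a : α | (a, qi) ∈ F w} = (↑(blk (w i)) : Set α) := by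
          intro w
          ext a
          simp only [Set.mem_setOf_eq, Finset.mem_coe]
          rw [hmemF]
          constructor
          · rintro ⟨j, hj, hq⟩
            rwa [(hcast i j).mp hq]
          · intro ha; exact ⟨i, ha, rfl⟩
        have hfibimg : {a : α | (a, qi) ∈ F w'} = φ '' {a : α | (a, qi) ∈ F w} := by
          ext c
          simp only [Set.mem_setOf_eq, Set.mem_image]
          constructor
          · intro hc
            have : (c, qi) ∈ (↑(F w') : Set (α × ℚ)) := hc
            rw [← himg] at this
            obtain ⟨⟨b, q⟩, hbq, hbe⟩ := this
            obtain ⟨j, _, rfl⟩ := (hmemF w b q).1 hbq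
            have hsnd : (g (b, ((j : ℕ) : ℚ))).2 = qi := by rw [hbe]
            rw [hfsnd, hfix j] at hsnd
            rw [hsnd] at hbq hbe
            rw [hgφ] at hbe
            exact ⟨b, Finset.mem_coe.1 hbq, ((Prod.mk.injEq _ _ _ _).mp hbe).1⟩
          · rintro ⟨b, hb, rfl⟩
            have : g (b, qi) ∈ (g : α × ℚ → α × ℚ) '' ↑(F w) := ⟨(b, qi), hb, rfl⟩
            rw [himg] at this
            rw [hgφ] at this
            exact this
        have hcards : (blk (w' i)).card = (blk (w i)).card := by
          have h1 : ((↑(blk (w' i)) : Set α)).ncard = ((↑(blk (w i)) : Set α)).ncard := by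
            rw [← hfib w', ← hfib w, hfibimg, Set.ncard_image_of_injective _ hφinj]
          rwa [Set.ncard_coe_finset, Set.ncard_coe_finset] at h1
        rw [blkcard, blkcard] at hcards
        cases hwi : w i <;> cases hwi' : w' i
        · rfl
        · rw [hwi, hwi'] at hcards; norm_num at hcards
        · rw [hwi, hwi'] at hcards; norm_num at hcards
        · rfl
      exact hst (by rw [hww'])
  refine ⟨main, ?_⟩
  rintro ⟨hQfin, c, k, hbound⟩
  obtain ⟨m, hm1, hmlt⟩ := exists_pow_gt (2 * c * 3 ^ k) (k + 1)
  obtain ⟨T, hTcard, hTprops, hTorb⟩ := main m hm1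
  -- count orbits fiberwise by cardinality
  have hncard : ∀ s ∈ T, s.ncard ∈ Finset.Icc m (2 * m) := by
    intro s hs
    obtain ⟨_, h1, h2⟩ := hTprops s hs
    exact Finset.mem_Icc.2 ⟨h1, h2⟩
  have hsplit : T.card = ∑ n ∈ Finset.Icc m (2 * m), (T.filter fun s => s.ncard = n).card :=
    Finset.card_eq_sum_card_fiberwise hncard
  have hfiber : ∀ n, (T.filter fun s => s.ncard = n).card ≤ profile G n := by
    intro n
    rcases (T.filter fun s => s.ncard = n).eq_empty_or_nonempty with he | ⟨s0, hs0⟩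
    · simp [he]
    · have hs0' := Finset.mem_filter.1 hs0
      haveI : Finite (Quotient (permSetoid G n)) := hQfin n
      haveI : Fintype (Quotient (permSetoid G n)) := Fintype.ofFinite _
      have hnon : Nonempty (Quotient (permSetoid G n)) :=
        ⟨⟦⟨s0, (hTprops s0 hs0'.1).1, hs0'.2⟩⟧⟩
      have hle : (T.filter fun s => s.ncard = n).card ≤
          (Finset.univ : Finset (Quotient (permSetoid G n))).card := by
        apply Finset.card_le_card_of_injOn
          (fun s => if h : s.Finite ∧ s.ncard = n then (⟦⟨s, h⟩⟧ : Quotient (permSetoid G n))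
            else Classical.arbitrary _)
        · intro a _; exact Finset.mem_univ _
        · intro s hs t ht hst
          have hsm := Finset.mem_filter.1 hs
          have htm := Finset.mem_filter.1 ht
          have hsh : s.Finite ∧ s.ncard = n := ⟨(hTprops s hsm.1).1, hsm.2⟩
          have hth : t.Finite ∧ t.ncard = n := ⟨(hTprops t htm.1).1, htm.2⟩
          simp only [dif_pos hsh, dif_pos hth] at hst
          have hrel := Quotient.exact hst
          obtain ⟨g, hg, himg⟩ := hrel
          by_contra hne'
          exact hTorb s hsm.1 t htm.1 hne' ⟨g, hg, himg⟩
      calc (T.filter fun s => s.ncard = n).card ≤ _ := hle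
        _ = profile G n := by rw [Finset.card_univ, profile, Nat.card_eq_fintype_card]
  have hsum : 2 ^ m ≤ ∑ n ∈ Finset.Icc m (2 * m), profile G n := by
    calc 2 ^ m ≤ T.card := hTcard
      _ = _ := hsplit
      _ ≤ _ := Finset.sum_le_sum fun n _ => hfiber n
  have hbig : ∑ n ∈ Finset.Icc m (2 * m), profile G n ≤ (m + 1) * (c * (2 * m + 1) ^ k) := by
    calc ∑ n ∈ Finset.Icc m (2 * m), profile G n
        ≤ ∑ _n ∈ Finset.Icc m (2 * m), c * (2 * m + 1) ^ k := by
          apply Finset.sum_le_sum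
          intro n hn
          calc profile G n ≤ c * (n + 1) ^ k := hbound n
            _ ≤ c * (2 * m + 1) ^ k := by
                apply Nat.mul_le_mul_left
                apply Nat.pow_le_pow_left
                have := (Finset.mem_Icc.1 hn).2
                omega
      _ = (m + 1) * (c * (2 * m + 1) ^ k) := by
          rw [Finset.sum_const, Nat.card_Icc, smul_eq_mul]
          congr 1
          omega
  have hpoly : (m + 1) * (c * (2 * m + 1) ^ k) ≤ 2 * c * 3 ^ k * m ^ (k + 1) := by
    calc (m + 1) * (c * (2 * m + 1) ^ k) ≤ (2 * m) * (c * (3 * m) ^ k) := by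
          apply Nat.mul_le_mul (by omega)
          apply Nat.mul_le_mul_left
          apply Nat.pow_le_pow_left
          omega
      _ = 2 * c * 3 ^ k * m ^ (k + 1) := by ring
  omega
end

section
/- Let α be a nonempty type and m a natural number. Let H1 be a normal subgroup of H2, both subgroups of Perm α, and let P1 be a normal subgroup of P2, both subgroups of Perm (Fin m). Then W(H1, P1) is a subgroup of W(H2, P2) inside Perm(α × Fin m), and its index satisfies [W(H2, P2) : W(H1, P1)] = [H2 : H1]^m · [P2 : P1]. Moreover, if the index type Fin m is replaced by ℕ (infinitely many blocks, with P1 ⊴ P2 ≤ Perm ℕ) and H1 is a proper subgroup of H2, then W(H1, P1) has infinite index in W(H2, P2). -/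
/-- The wreath product `H ≀ P` of `H ≤ Perm α` and `P ≤ Perm I`, realized as a
subgroup of `Perm (α × I)`. -/
def wreath {α I : Type*} (H : Subgroup (Equiv.Perm α)) (P : Subgroup (Equiv.Perm I)) :
    Subgroup (Equiv.Perm (α × I)) where
  carrier := {g | ∃ σ ∈ P, ∃ h : I → Equiv.Perm α, (∀ i, h i ∈ H) ∧
    ∀ (a : α) (i : I), g (a, i) = (h i a, σ i)}
  one_mem' := ⟨1, P.one_mem, fun _ => 1, fun _ => H.one_mem, fun _ _ => rfl⟩
  mul_mem' := by
    rintro g g' ⟨σ, hσ, h, hh, hg⟩ ⟨σ', hσ', h', hh', hg'⟩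
    refine ⟨σ * σ', P.mul_mem hσ hσ', fun i => h (σ' i) * h' i,
      fun i => H.mul_mem (hh _) (hh' _), fun a i => ?_⟩
    simp [Equiv.Perm.mul_apply, hg', hg]
  inv_mem' := by
    rintro g ⟨σ, hσ, h, hh, hg⟩
    refine ⟨σ⁻¹, P.inv_mem hσ, fun i => (h (σ⁻¹ i))⁻¹,
      fun i => H.inv_mem (hh _), fun a i => ?_⟩
    have key : g ((h (σ⁻¹ i))⁻¹ a, σ⁻¹ i) = (a, i) := by rw [hg]; simp
    rw [← key]; simp

/-!
Write a block-preserving permutation of `α × I` as a pair `(k, σ)` with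
`(a, i) ↦ (k (σ i) a, σ i)`, indexing the fibre permutations by the target block. Composition
then becomes the multiplication of the semidirect product `(I → Perm α) ⋊ Perm I`, and
`wreath H P` is the faithful image of its subgroup `(I → H) ⋊ P`.

Along `(I → H₁) ⋊ P₁ ≤ (I → H₁) ⋊ P₂ ≤ (I → H₂) ⋊ P₂` the index splits into two factors.
The first is `[P₂ : P₁]`, pulled back along the projection to `Perm I`. For the second,
`(k, σ)` and `(k', σ')` lie in the same left coset iff `k j H₁ = k' j H₁` for every block `j`,
so the cosets are counted by `I → H₂ ⧸ H₁`: this is `[H₂ : H₁] ^ m` for `m` blocks, and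
infinite for infinitely many blocks as soon as `H₁ < H₂`.
-/

open Equiv

theorem Subgroup.index_eq_natCard_of_eq_iff_inv_mul_mem {G X : Type*} [Group G]
    {H : Subgroup G} (f : G → X) (hf : Function.Surjective f)
    (hfH : ∀ x y, f x = f y ↔ x⁻¹ * y ∈ H) : H.index = Nat.card X :=
  Nat.card_congr <| (Quotient.congrRight fun x y => by
    rw [QuotientGroup.leftRel_apply, Setoid.ker_def, hfH]).trans
    (Setoid.quotientKerEquivOfSurjective f hf)

def PermWreath.blockShift (α I : Type*) : Perm I →* MulAut (I → Perm α) where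
  toFun σ := MulEquiv.arrowCongr σ (MulEquiv.refl _)
  map_one' := rfl
  map_mul' _ _ := rfl

abbrev PermWreath (α I : Type*) := (I → Perm α) ⋊[PermWreath.blockShift α I] Perm I

namespace PermWreath

variable {α I : Type*}

@[simp]
theorem blockShift_apply (σ : Perm I) (k : I → Perm α) (j : I) :
    blockShift α I σ k j = k (σ⁻¹ j) := rfl

@[simp]
theorem blockShift_symm_apply (σ : Perm I) (k : I → Perm α) (j : I) :
    (blockShift α I σ).symm k j = k (σ j) := rfl

instance : MulAction (PermWreath α I) (α × I) where
  smul x p := (x.left (x.right p.2) p.1, x.right p.2)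
  one_smul _ := rfl
  mul_smul x y p := Prod.ext (by
    change (x.left * blockShift α I x.right y.left) (x.right (y.right p.2)) p.1 =
      x.left (x.right (y.right p.2)) (y.left (y.right p.2) p.1)
    simp [Perm.mul_apply]) rfl

theorem smul_def (x : PermWreath α I) (p : α × I) :
    x • p = (x.left (x.right p.2) p.1, x.right p.2) := rfl

variable (α I) in
abbrev toPerm : PermWreath α I →* Perm (α × I) := MulAction.toPermHom _ _

theorem toPerm_injective [Nonempty α] : Function.Injective (toPerm α I) := by
  intro x y hxy
  have h := fun a i => congrArg (· (a, i)) hxy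
  simp only [MulAction.toPermHom_apply, MulAction.toPerm_apply, smul_def, Prod.mk.injEq] at h
  have hright : x.right = y.right := Equiv.ext fun i => (h (Classical.arbitrary α) i).2
  refine SemidirectProduct.ext (funext fun j => Equiv.ext fun a => ?_) hright
  simpa [hright] using (h a (y.right⁻¹ j)).1

def wreathSubgroup (H : Subgroup (Perm α)) (P : Subgroup (Perm I)) :
    Subgroup (PermWreath α I) where
  carrier := {x | (∀ j, x.left j ∈ H) ∧ x.right ∈ P}
  one_mem' := ⟨fun _ => H.one_mem, P.one_mem⟩
  mul_mem' := fun ⟨hx, hx'⟩ ⟨hy, hy'⟩ => ⟨fun j => H.mul_mem (hx j) (hy _), P.mul_mem hx' hy'⟩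
  inv_mem' := fun ⟨hx, hx'⟩ => ⟨fun _ => H.inv_mem (hx _), P.inv_mem hx'⟩

theorem mem_wreathSubgroup {H : Subgroup (Perm α)} {P : Subgroup (Perm I)}
    {x : PermWreath α I} : x ∈ wreathSubgroup H P ↔ (∀ j, x.left j ∈ H) ∧ x.right ∈ P :=
  Iff.rfl

theorem map_toPerm_wreathSubgroup (H : Subgroup (Perm α)) (P : Subgroup (Perm I)) :
    (wreathSubgroup H P).map (toPerm α I) = wreath H P := by
  ext g
  constructor
  · rintro ⟨x, ⟨hl, hr⟩, rfl⟩
    exact ⟨x.right, hr, fun i => x.left (x.right i), fun i => hl _, fun a i => rfl⟩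
  · rintro ⟨σ, hσ, h, hh, hg⟩
    refine ⟨⟨fun j => h (σ⁻¹ j), σ⟩, ⟨fun _ => hh _, hσ⟩, Equiv.ext fun ⟨a, i⟩ => ?_⟩
    simp [hg, smul_def]

theorem wreathSubgroup_mono {H₁ H₂ : Subgroup (Perm α)} {P₁ P₂ : Subgroup (Perm I)}
    (hH : H₁ ≤ H₂) (hP : P₁ ≤ P₂) : wreathSubgroup H₁ P₁ ≤ wreathSubgroup H₂ P₂ :=
  fun _ ⟨hl, hr⟩ => ⟨fun j => hH (hl j), hP hr⟩

theorem map_rightHom_wreathSubgroup (H : Subgroup (Perm α)) (P : Subgroup (Perm I)) :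
    (wreathSubgroup H P).map SemidirectProduct.rightHom = P := by
  ext σ
  exact ⟨fun ⟨_, ⟨_, hx⟩, hσ⟩ => hσ ▸ hx,
    fun hσ => ⟨SemidirectProduct.inr σ, ⟨fun _ => H.one_mem, hσ⟩, rfl⟩⟩

theorem relIndex_wreathSubgroup_right (H : Subgroup (Perm α)) (P₁ P₂ : Subgroup (Perm I)) :
    (wreathSubgroup H P₁).relIndex (wreathSubgroup H P₂) = P₁.relIndex P₂ := by
  have hinf :
      wreathSubgroup H P₁ = P₁.comap SemidirectProduct.rightHom ⊓ wreathSubgroup H ⊤ := by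
    ext x
    simp [mem_wreathSubgroup, and_comm]
  rw [hinf, ← Subgroup.inf_relIndex_right, inf_assoc,
    inf_of_le_right (wreathSubgroup_mono le_rfl le_top), Subgroup.inf_relIndex_right,
    Subgroup.relIndex_comap, map_rightHom_wreathSubgroup]

theorem inv_mul_left_apply (x y : PermWreath α I) (j : I) :
    (x⁻¹ * y).left j = (x.left (x.right j))⁻¹ * y.left (x.right j) := by
  simp [SemidirectProduct.mul_left, SemidirectProduct.inv_left]

theorem relIndex_wreathSubgroup_left (H₁ H₂ : Subgroup (Perm α)) (P : Subgroup (Perm I)) :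
    (wreathSubgroup H₁ P).relIndex (wreathSubgroup H₂ P) =
      Nat.card (I → H₂ ⧸ H₁.subgroupOf H₂) := by
  refine Subgroup.index_eq_natCard_of_eq_iff_inv_mul_mem
    (fun x j => (⟨x.1.left j, x.2.1 j⟩ : H₂)) (fun u => ?_) (fun x y => ?_)
  · refine ⟨⟨SemidirectProduct.inl fun j => (u j).out, fun j => (u j).out.2, P.one_mem⟩, ?_⟩
    funext j
    exact QuotientGroup.out_eq' (u j)
  · have hP : ((x : PermWreath α I)⁻¹ * y).right ∈ P := (x⁻¹ * y).2.2
    rw [funext_iff, Subgroup.mem_subgroupOf]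
    simp only [QuotientGroup.eq, Subgroup.mem_subgroupOf, Subgroup.coe_mul, Subgroup.coe_inv]
    simp only [mem_wreathSubgroup, and_iff_left hP, inv_mul_left_apply]
    exact x.1.right.forall_congr_right.symm

theorem relIndex_wreathSubgroup {H₁ H₂ : Subgroup (Perm α)} {P₁ P₂ : Subgroup (Perm I)}
    (hH : H₁ ≤ H₂) (hP : P₁ ≤ P₂) :
    (wreathSubgroup H₁ P₁).relIndex (wreathSubgroup H₂ P₂) =
      Nat.card (I → H₂ ⧸ H₁.subgroupOf H₂) * P₁.relIndex P₂ := by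
  rw [← Subgroup.relIndex_mul_relIndex _ _ _ (wreathSubgroup_mono le_rfl hP)
    (wreathSubgroup_mono hH le_rfl), relIndex_wreathSubgroup_right,
    relIndex_wreathSubgroup_left, mul_comm]

end PermWreath

open PermWreath

theorem wreath_mono {α I : Type*} {H₁ H₂ : Subgroup (Perm α)} {P₁ P₂ : Subgroup (Perm I)}
    (hH : H₁ ≤ H₂) (hP : P₁ ≤ P₂) : wreath H₁ P₁ ≤ wreath H₂ P₂ :=
  fun _ ⟨σ, hσ, h, hh, hg⟩ => ⟨σ, hP hσ, h, fun i => hH (hh i), hg⟩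

theorem relIndex_wreath {α I : Type*} [Nonempty α] {H₁ H₂ : Subgroup (Perm α)}
    {P₁ P₂ : Subgroup (Perm I)} (hH : H₁ ≤ H₂) (hP : P₁ ≤ P₂) :
    (wreath H₁ P₁).relIndex (wreath H₂ P₂) =
      Nat.card (I → H₂ ⧸ H₁.subgroupOf H₂) * P₁.relIndex P₂ := by
  rw [← map_toPerm_wreathSubgroup, ← map_toPerm_wreathSubgroup,
    Subgroup.relIndex_map_map_of_injective _ _ toPerm_injective, relIndex_wreathSubgroup hH hP]

theorem wreath_mono_and_index_general (α : Type*) [Nonempty α] (m : ℕ)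
    (H1 H2 : Subgroup (Equiv.Perm α)) (hH : H1 ≤ H2)
    (P1 P2 : Subgroup (Equiv.Perm (Fin m))) (hP : P1 ≤ P2) :
    (wreath H1 P1 ≤ wreath H2 P2 ∧
      ((wreath H1 P1).subgroupOf (wreath H2 P2)).index
        = (H1.subgroupOf H2).index ^ m * (P1.subgroupOf P2).index) ∧
    (∀ Q1 Q2 : Subgroup (Equiv.Perm ℕ), Q1 ≤ Q2 →
      (∀ p ∈ Q2, ∀ q ∈ Q1, p * q * p⁻¹ ∈ Q1) → H1 < H2 →
      ((wreath H1 Q1).subgroupOf (wreath H2 Q2)).index = 0) := by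
  refine ⟨⟨wreath_mono hH hP, ?_⟩, fun Q1 Q2 hQ _ hlt => ?_⟩
  · rw [← Subgroup.relIndex, relIndex_wreath hH hP, Nat.card_fun, Nat.card_fin]
    rfl
  · have : Nontrivial (H2 ⧸ H1.subgroupOf H2) := by
      rw [QuotientGroup.nontrivial_iff, Ne, Subgroup.subgroupOf_eq_top]
      exact hlt.not_ge
    rw [← Subgroup.relIndex, relIndex_wreath hlt.le hQ, Nat.card_eq_zero_of_infinite, zero_mul]

/-- Wreath products of nested subgroups: if `H1 ⊴ H2 ≤ Perm α` and
`P1 ⊴ P2 ≤ Perm (Fin m)`, then `W(H1,P1) ≤ W(H2,P2)` with index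
`[H2:H1]^m ⬝ [P2:P1]`; and over infinitely many blocks (indexed by `ℕ`), if
`H1 < H2` then `W(H1,P1)` has infinite index in `W(H2,P2)`. -/
theorem wreath_mono_and_index (α : Type*) [Nonempty α] (m : ℕ)
    (H1 H2 : Subgroup (Equiv.Perm α)) (hH : H1 ≤ H2)
    (hHnorm : ∀ h ∈ H2, ∀ k ∈ H1, h * k * h⁻¹ ∈ H1)
    (P1 P2 : Subgroup (Equiv.Perm (Fin m))) (hP : P1 ≤ P2)
    (hPnorm : ∀ p ∈ P2, ∀ q ∈ P1, p * q * p⁻¹ ∈ P1) :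
    (wreath H1 P1 ≤ wreath H2 P2 ∧
      ((wreath H1 P1).subgroupOf (wreath H2 P2)).index
        = (H1.subgroupOf H2).index ^ m * (P1.subgroupOf P2).index) ∧
    (∀ Q1 Q2 : Subgroup (Equiv.Perm ℕ), Q1 ≤ Q2 →
      (∀ p ∈ Q2, ∀ q ∈ Q1, p * q * p⁻¹ ∈ Q1) → H1 < H2 →
      ((wreath H1 Q1).subgroupOf (wreath H2 Q2)).index = 0) :=
  wreath_mono_and_index_general α m H1 H2 hH P1 P2 hP
end

section
/- Let G be an oligomorphic group of permutations of a set E. If r and s are G-invariant setoids on E all of whose equivalence classes are finite, then every equivalence class of the join r ⊔ s (taken in the lattice Setoid E) is finite. -/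
/-- A setoid (equivalence relation) on `E` is `G`-invariant — i.e. a block
system for `G` — if its relation is preserved by every element of `G`. -/
def GInvariant {E : Type*} (G : Subgroup (Equiv.Perm E)) (r : Setoid E) : Prop :=
  ∀ g ∈ G, ∀ x y : E, r.r x y ↔ r.r (g x) (g y)

/-! Consider the graph on `E` whose edges join points related by `r` or by `s`. Its connected
components are the classes of `r ⊔ s`, and its balls of finite radius are finite because the
classes of `r` and `s` are. The graph distance `d` is symmetric and `G`-invariant, so `d x y`
depends only on the `G`-orbit of the 2-set `{x, y}`. Oligomorphy leaves finitely many such orbits,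
hence `d x` is bounded on the class of `x`, which therefore lies in a finite ball. -/

namespace SimpleGraph

variable {V W : Type*} {G : SimpleGraph V} {G' : SimpleGraph W}

theorem Hom.edist_map_le (f : G →g G') (u v : V) : G'.edist (f u) (f v) ≤ G.edist u v := by
  by_cases huv : G.Reachable u v
  · obtain ⟨p, hp⟩ := huv.exists_walk_length_eq_edist
    simpa [hp] using edist_le (p.map f)
  · exact edist_eq_top_of_not_reachable huv ▸ le_top

theorem Iso.edist_map (φ : G ≃g G') (u v : V) : G'.edist (φ u) (φ v) = G.edist u v := by
  refine le_antisymm (φ.toHom.edist_map_le u v) ?_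
  simpa using φ.symm.toHom.edist_map_le (φ u) (φ v)

theorem Iso.dist_map (φ : G ≃g G') (u v : V) : G'.dist (φ u) (φ v) = G.dist u v := by
  simp only [dist, φ.edist_map]

theorem ball_succ_subset (c : V) (n : ℕ) :
    G.ball c (n + 1) ⊆ insert c (⋃ w ∈ G.ball c n, G.neighborSet w) := by
  intro v hv
  rcases eq_or_ne v c with rfl | hvc
  · exact Set.mem_insert v _
  obtain ⟨p, hp⟩ := exists_walk_of_edist_ne_top (ne_top_of_lt (mem_ball.mp hv))
  cases p with
  | nil => exact absurd rfl hvc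
  | @cons _ w _ hvw q =>
    refine Set.mem_insert_of_mem _ (Set.mem_biUnion (x := w) ?_ hvw.symm)
    rw [mem_ball, ← hp, Walk.length_cons, Nat.cast_succ] at hv
    exact (edist_le q).trans_lt (lt_of_add_lt_add_right hv)

theorem finite_ball (hG : ∀ v, (G.neighborSet v).Finite) (c : V) (n : ℕ) :
    (G.ball c n).Finite := by
  induction n with
  | zero => simp
  | succ n ih =>
    exact ((ih.biUnion fun w _ => hG w).insert c).subset (by exact_mod_cast ball_succ_subset c n)

theorem reachableSetoid_fromRel (R : V → V → Prop) :
    (fromRel R).reachableSetoid = Relation.EqvGen.setoid R := by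
  refine le_antisymm (fun u v (huv : (fromRel R).Reachable u v) => ?_)
    (Setoid.eqvGen_le fun u v huv => ?_)
  · rw [reachable_iff_reflTransGen] at huv
    induction huv with
    | refl => exact Setoid.refl' _ u
    | tail _ hadj ih =>
      refine Setoid.trans' _ ih ?_
      rcases ((fromRel_adj R _ _).mp hadj).2 with h | h
      · exact Relation.EqvGen.rel _ _ h
      · exact Setoid.symm' _ (Relation.EqvGen.rel _ _ h)
  · rcases eq_or_ne u v with rfl | hne
    · exact Reachable.refl u
    · exact ((fromRel_adj R u v).mpr ⟨hne, Or.inl huv⟩).reachable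

end SimpleGraph

theorem finite_range_of_symm_of_invariant {E α : Type*} {G : Subgroup (Equiv.Perm E)}
    [Finite (Quotient (permSetoid G 2))] {f : E → E → α} (hsymm : ∀ a b, f a b = f b a)
    (hinv : ∀ g ∈ G, ∀ a b, f (g a) (g b) = f a b) (x : E) : (Set.range (f x)).Finite := by
  let pairOrbit : {y // y ≠ x} → Quotient (permSetoid G 2) := fun y =>
    ⟦⟨{x, y.1}, (Set.finite_singleton _).insert x, Set.ncard_pair y.2.symm⟩⟧
  -- `g` maps `{x, y}` onto `{x, y'}` either fixing `x` or swapping `x` and `y'`; in both cases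
  -- invariance (and, for the swap, symmetry) gives `f x y = f x y'`.
  have hfactors : (fun y : {y // y ≠ x} => f x y).FactorsThrough pairOrbit := by
    intro y y' hyy'
    obtain ⟨g, hg, himage⟩ := Quotient.exact hyy'
    change g '' {x, y.1} = {x, y'.1} at himage
    have hgx : g x = x ∨ g x = y' :=
      show g x ∈ ({x, y'.1} : Set E) from himage ▸ Set.mem_image_of_mem g (by simp)
    have hgy : g y = x ∨ g y = y' :=
      show g y ∈ ({x, y'.1} : Set E) from himage ▸ Set.mem_image_of_mem g (by simp)
    have hne : g x ≠ g y := g.injective.ne (Ne.symm y.2)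
    change f x y = f x y'
    rcases hgx with hgx | hgx <;> rcases hgy with hgy | hgy
    · exact absurd (hgx.trans hgy.symm) hne
    · rw [← hinv g hg, hgx, hgy]
    · rw [← hinv g hg, hgx, hgy, hsymm]
    · exact absurd (hgx.trans hgy.symm) hne
  refine ((Set.finite_range (Function.extend pairOrbit (fun y => f x y) fun _ => f x x)).insert
    (f x x)).subset ?_
  rintro _ ⟨y, rfl⟩
  by_cases hy : y = x
  · rw [hy]
    exact Set.mem_insert _ _
  · exact Set.mem_insert_of_mem _ ⟨pairOrbit ⟨y, hy⟩, hfactors.extend_apply _ ⟨y, hy⟩⟩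

section joinGraph

variable {E : Type*} (r s : Setoid E)

def joinGraph : SimpleGraph E := SimpleGraph.fromRel (⇑r ⊔ ⇑s)

variable {r s}

theorem joinGraph_reachable_iff {x y : E} : (joinGraph r s).Reachable x y ↔ (r ⊔ s).r x y := by
  rw [Setoid.sup_def, ← SimpleGraph.reachableSetoid_fromRel]
  rfl

theorem finite_neighborSet_joinGraph (hrfin : ∀ x : E, {y | r.r x y}.Finite)
    (hsfin : ∀ x : E, {y | s.r x y}.Finite) (x : E) : ((joinGraph r s).neighborSet x).Finite := by
  refine ((hrfin x).union (hsfin x)).subset fun y hxy => ?_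
  obtain ⟨-, h | h⟩ := (SimpleGraph.fromRel_adj _ x y).mp hxy
  · exact h
  · exact h.elim (fun h => Or.inl (r.symm h)) (fun h => Or.inr (s.symm h))

theorem joinGraph_dist_apply {G : Subgroup (Equiv.Perm E)} (hr : GInvariant G r)
    (hs : GInvariant G s) {g : Equiv.Perm E} (hg : g ∈ G) (a b : E) :
    (joinGraph r s).dist (g a) (g b) = (joinGraph r s).dist a b :=
  SimpleGraph.Iso.dist_map (G := joinGraph r s) ⟨g, fun {a b} => by
    simp [joinGraph, SimpleGraph.fromRel_adj, ← hr g hg, ← hs g hg]⟩ a b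

end joinGraph

/-- If `G` is oligomorphic and `r`, `s` are `G`-invariant setoids on `E` with
all equivalence classes finite, then all equivalence classes of the join
`r ⊔ s` are finite. -/
theorem join_of_finite_block_systems {E : Type*} (G : Subgroup (Equiv.Perm E))
    (holig : ∀ n, Finite (Quotient (permSetoid G n)))
    (r s : Setoid E) (hr : GInvariant G r) (hs : GInvariant G s)
    (hrfin : ∀ x : E, {y | r.r x y}.Finite)
    (hsfin : ∀ x : E, {y | s.r x y}.Finite) :
    ∀ x : E, {y | (r ⊔ s).r x y}.Finite := by
  intro x
  have : Finite (Quotient (permSetoid G 2)) := holig 2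
  obtain ⟨N, hN⟩ := (finite_range_of_symm_of_invariant (f := (joinGraph r s).dist)
    (fun _ _ => SimpleGraph.dist_comm)
    (fun g hg => joinGraph_dist_apply hr hs hg) x).bddAbove
  refine ((joinGraph r s).finite_ball (finite_neighborSet_joinGraph hrfin hsfin) x (N + 1)).subset
    fun y hy => ?_
  have hreach : (joinGraph r s).Reachable y x := (joinGraph_reachable_iff.mpr hy).symm
  rw [SimpleGraph.mem_ball, ← hreach.coe_dist_eq_edist, SimpleGraph.dist_comm]
  exact_mod_cast Nat.lt_succ_of_le (hN ⟨y, rfl⟩)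
end

section
/- Let E be a countably infinite set and let G be a P-oligomorphic group of permutations of E. Then the collection of G-invariant setoids on E all of whose equivalence classes are finite is a finite set; it is closed under the lattice operations ⊓ and ⊔ of Setoid E, contains the equality setoid as its least element, and possesses a greatest element. -/
/-- The collection of `G`-invariant setoids on `E` with all classes finite. -/
def finiteBlockSystems {E : Type*} (G : Subgroup (Equiv.Perm E)) : Set (Setoid E) :=
  {r | GInvariant G r ∧ ∀ x : E, {y | r.r x y}.Finite}

section Aux
variable {E : Type*} {G : Subgroup (Equiv.Perm E)}

lemma rr_eq (r : Setoid E) (x y : E) : r.r x y ↔ r x y := Iff.rfl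

def pairElt (x y : E) (h : x ≠ y) : {s : Set E // s.Finite ∧ s.ncard = 2} :=
  ⟨{x, y}, (Set.finite_singleton y).insert x, Set.ncard_pair h⟩

lemma image_pair (g : Equiv.Perm E) (x y : E) : g '' {x, y} = {g x, g y} := by
  simp [Set.image_insert_eq]

lemma pair_orbit_cases {g : Equiv.Perm E} {x y a b : E}
    (h : ({g x, g y} : Set E) = {a, b}) :
    (g x = a ∧ g y = b) ∨ (g x = b ∧ g y = a) := by
  rw [Set.pair_eq_pair_iff] at h; tauto

/-- orbit-set of pairs related by `r`. -/
def orbSet (G : Subgroup (Equiv.Perm E)) (r : Setoid E) :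
    Set (Quotient (permSetoid G 2)) :=
  {q | ∃ x y, ∃ h : x ≠ y, r x y ∧ q = Quotient.mk (permSetoid G 2) (pairElt x y h)}

lemma rel_of_orbSet_subset {r s : Setoid E} (hs : GInvariant G s)
    (hsub : orbSet G r ⊆ orbSet G s) {x y : E} (hxy : r x y) : s x y := by
  rcases eq_or_ne x y with rfl | hne
  · exact s.refl' x
  · obtain ⟨a, b, hab, hsab, heq⟩ := hsub ⟨x, y, hne, hxy, rfl⟩
    have hrel := Quotient.exact heq
    obtain ⟨g, hg, himg⟩ := hrel
    have himg' : ({g x, g y} : Set E) = {a, b} := by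
      have := himg
      simpa [pairElt, image_pair] using this
    have key : s (g x) (g y) := by
      rcases pair_orbit_cases himg' with ⟨h1, h2⟩ | ⟨h1, h2⟩
      · rw [h1, h2]; exact hsab
      · rw [h1, h2]; exact s.symm' hsab
    exact ((hs g hg x y).mpr key)

lemma orbSet_injOn : Set.InjOn (orbSet G) {r : Setoid E | GInvariant G r} := by
  intro r hr s hs h
  refine Setoid.ext fun x y => ⟨fun hxy => rel_of_orbSet_subset hs h.le hxy,
    fun hxy => rel_of_orbSet_subset hr h.ge hxy⟩

end Aux


section Steps
variable {E : Type*}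

def stepRel (r s : Setoid E) (x y : E) : Prop := r x y ∨ s x y

def steps (r s : Setoid E) : ℕ → E → E → Prop
  | 0, x, y => x = y
  | n+1, x, y => ∃ z, steps r s n x z ∧ stepRel r s z y

variable {r s : Setoid E}

lemma stepRel_symm {x y : E} (h : stepRel r s x y) : stepRel r s y x := by
  rcases h with h | h
  · exact Or.inl (r.symm' h)
  · exact Or.inr (s.symm' h)

lemma steps_succ_of (n : ℕ) {x y : E} (h : steps r s n x y) : steps r s (n+1) x y :=
  ⟨y, h, Or.inl (r.refl' y)⟩

lemma steps_mono {k n : ℕ} (hkn : k ≤ n) {x y : E} (h : steps r s k x y) :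
    steps r s n x y := by
  induction n with
  | zero => simpa [Nat.le_zero.mp hkn] using h
  | succ n ih =>
    rcases Nat.lt_or_ge k (n+1) with hk | hk
    · exact steps_succ_of n (ih (Nat.lt_succ_iff.mp hk))
    · have : k = n + 1 := le_antisymm hkn hk
      simpa [this] using h

lemma steps_prepend {n : ℕ} {x z y : E} (hxz : stepRel r s x z)
    (h : steps r s n z y) : steps r s (n+1) x y := by
  induction n generalizing y with
  | zero => subst h; exact ⟨x, rfl, hxz⟩
  | succ n ih =>
    obtain ⟨w, hw, hR⟩ := h
    exact ⟨w, ih hw, hR⟩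

lemma steps_symm {n : ℕ} {x y : E} (h : steps r s n x y) : steps r s n y x := by
  induction n generalizing y with
  | zero => exact h.symm
  | succ n ih =>
    obtain ⟨z, hz, hR⟩ := h
    exact steps_prepend (stepRel_symm hR) (ih hz)

lemma steps_trans {m n : ℕ} {x y z : E} (h1 : steps r s m x y)
    (h2 : steps r s n y z) : steps r s (m + n) x z := by
  induction n generalizing z with
  | zero => subst h2; simpa using h1
  | succ n ih =>
    obtain ⟨w, hw, hR⟩ := h2
    exact ⟨w, ih hw, hR⟩

/-- the join of two setoids, described via alternating paths. -/
def joinSetoid (r s : Setoid E) : Setoid E where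
  r x y := ∃ n, steps r s n x y
  iseqv := by
    constructor
    · exact fun x => ⟨0, rfl⟩
    · rintro x y ⟨n, h⟩; exact ⟨n, steps_symm h⟩
    · rintro x y z ⟨m, h1⟩ ⟨n, h2⟩; exact ⟨m + n, steps_trans h1 h2⟩

lemma sup_eq_joinSetoid (r s : Setoid E) : r ⊔ s = joinSetoid r s := by
  apply le_antisymm
  · refine sup_le ?_ ?_
    · exact fun x y h => ⟨1, x, rfl, Or.inl h⟩
    · exact fun x y h => ⟨1, x, rfl, Or.inr h⟩
  · rintro x y ⟨n, h⟩
    induction n generalizing y with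
    | zero => exact h ▸ (r ⊔ s).refl' x
    | succ n ih =>
      obtain ⟨z, hz, hR⟩ := h
      refine (r ⊔ s).trans' (ih hz) ?_
      rcases hR with h' | h'
      · exact (le_sup_left : r ≤ r ⊔ s) h'
      · exact (le_sup_right : s ≤ r ⊔ s) h'

lemma sup_rel_iff (r s : Setoid E) (x y : E) :
    (r ⊔ s) x y ↔ ∃ n, steps r s n x y := by
  rw [sup_eq_joinSetoid]; rfl

end Steps
section Inv
variable {E : Type*} {G : Subgroup (Equiv.Perm E)} {r s : Setoid E}

lemma steps_map (hr : GInvariant G r) (hs : GInvariant G s)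
    {g : Equiv.Perm E} (hg : g ∈ G) {n : ℕ} {x y : E}
    (h : steps r s n x y) : steps r s n (g x) (g y) := by
  induction n generalizing y with
  | zero => exact congrArg g h
  | succ n ih =>
    obtain ⟨z, hz, hR⟩ := h
    refine ⟨g z, ih hz, ?_⟩
    rcases hR with h' | h'
    · exact Or.inl ((hr g hg z y).mp h')
    · exact Or.inr ((hs g hg z y).mp h')

lemma steps_iff_map (hr : GInvariant G r) (hs : GInvariant G s)
    {g : Equiv.Perm E} (hg : g ∈ G) (n : ℕ) (x y : E) :
    steps r s n x y ↔ steps r s n (g x) (g y) := by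
  refine ⟨steps_map hr hs hg, fun h => ?_⟩
  have := steps_map hr hs (G.inv_mem hg) h
  simpa using this

lemma sup_invariant (hr : GInvariant G r) (hs : GInvariant G s) :
    GInvariant G (r ⊔ s) := by
  intro g hg x y
  exact (sup_rel_iff r s x y).trans
    ((exists_congr fun n => steps_iff_map hr hs hg n x y).trans
      (sup_rel_iff r s (g x) (g y)).symm)

lemma ball_finite (hrf : ∀ x : E, {y | r.r x y}.Finite)
    (hsf : ∀ x : E, {y | s.r x y}.Finite) (n : ℕ) (x : E) :
    {y | steps r s n x y}.Finite := by
  induction n with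
  | zero =>
    have : {y | steps r s 0 x y} = {x} := by ext y; simp [steps, eq_comm]
    rw [this]; exact Set.finite_singleton x
  | succ n ih =>
    have hsub : {y | steps r s (n+1) x y} ⊆
        ⋃ z ∈ {z | steps r s n x z}, ({y | r.r z y} ∪ {y | s.r z y}) := by
      rintro y ⟨z, hz, hR⟩
      refine Set.mem_biUnion hz ?_
      rcases hR with h | h
      · exact Or.inl h
      · exact Or.inr h
    exact ((ih.biUnion fun z _ => (hrf z).union (hsf z)).subset hsub)

/-- distance exactly `n` -/
def IsDist (r s : Setoid E) (n : ℕ) (a b : E) : Prop :=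
  steps r s n a b ∧ ∀ k < n, ¬ steps r s k a b

lemma IsDist.symm {n : ℕ} {a b : E} (h : IsDist r s n a b) : IsDist r s n b a :=
  ⟨steps_symm h.1, fun k hk hs' => h.2 k hk (steps_symm hs')⟩

lemma IsDist.map (hr : GInvariant G r) (hs : GInvariant G s)
    {g : Equiv.Perm E} (hg : g ∈ G) {n : ℕ} {a b : E}
    (h : IsDist r s n a b) : IsDist r s n (g a) (g b) :=
  ⟨steps_map hr hs hg h.1,
   fun k hk hk' => h.2 k hk ((steps_iff_map hr hs hg k a b).mpr hk')⟩

lemma IsDist.unique {m n : ℕ} {a b : E} (h1 : IsDist r s m a b)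
    (h2 : IsDist r s n a b) : m = n := by
  by_contra hne
  rcases Nat.lt_or_ge m n with h | h
  · exact h2.2 m h h1.1
  · exact h1.2 n (lt_of_le_of_ne h (Ne.symm hne)) h2.1

lemma IsDist.ne {n : ℕ} {a b : E} (h : IsDist r s n a b) (hn : 0 < n) : a ≠ b := by
  rintro rfl
  exact h.2 0 hn rfl

/-- key lemma: if the orbits of pairs are finitely many, the classes of a
join of two invariant finite-class setoids are finite. -/
lemma join_classes_finite [Finite (Quotient (permSetoid G 2))]
    (hr : GInvariant G r) (hrf : ∀ x : E, {y | r.r x y}.Finite)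
    (hs : GInvariant G s) (hsf : ∀ x : E, {y | s.r x y}.Finite) (x : E) :
    {y | (r ⊔ s).r x y}.Finite := by
  classical
  by_contra hinf
  set S : Set ℕ := {n | 0 < n ∧ ∃ a b : E, IsDist r s n a b} with hSdef
  have hub : ∀ N : ℕ, ∃ m ∈ S, N < m := by
    intro N
    have hns : ¬ ({y | (r ⊔ s).r x y} ⊆ {y | steps r s N x y}) :=
      fun hsub => hinf ((ball_finite hrf hsf N x).subset hsub)
    rw [Set.not_subset] at hns
    obtain ⟨y, hy, hny⟩ := hns
    have hex : ∃ n, steps r s n x y := (sup_rel_iff r s x y).mp hy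
    have hdist : IsDist r s (Nat.find hex) x y :=
      ⟨Nat.find_spec hex, fun k hk => Nat.find_min hex hk⟩
    have hNm : N < Nat.find hex := by
      by_contra hle
      exact hny (steps_mono (Nat.le_of_not_lt hle) hdist.1)
    exact ⟨Nat.find hex, ⟨Nat.lt_of_le_of_lt (Nat.zero_le N) hNm, x, y, hdist⟩, hNm⟩
  have hnb : ¬ BddAbove S := by
    rintro ⟨N, hN⟩
    obtain ⟨m, hm, hNm⟩ := hub N
    exact absurd (hN hm) (Nat.not_le.mpr hNm)
  have hSinf : S.Infinite := Set.infinite_of_not_bddAbove hnb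
  choose a b hab using fun n : ↥S => n.2.2
  have hne : ∀ n : ↥S, a n ≠ b n := fun n => (hab n).ne n.2.1
  have hinj : Function.Injective
      (fun n : ↥S => Quotient.mk (permSetoid G 2) (pairElt (a n) (b n) (hne n))) := by
    intro m n h
    obtain ⟨g, hg, himg⟩ := Quotient.exact h
    have himg' : ({g (a m), g (b m)} : Set E) = {a n, b n} := by
      simpa [pairElt, image_pair] using himg
    have hdist1 : IsDist r s m.1 (g (a m)) (g (b m)) := (hab m).map hr hs hg
    have hdist2 : IsDist r s m.1 (a n) (b n) := by
      rcases pair_orbit_cases himg' with ⟨h1, h2⟩ | ⟨h1, h2⟩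
      · rwa [h1, h2] at hdist1
      · rw [h1, h2] at hdist1; exact hdist1.symm
    exact Subtype.ext (hdist2.unique (hab n))
  haveI : Infinite ↥S := hSinf.to_subtype
  haveI : Finite ↥S := Finite.of_injective _ hinj
  exact not_finite ↥S

end Inv


/-- For a P-oligomorphic group `G` of permutations of a countably infinite set
`E`, the collection of `G`-invariant setoids with finite classes is finite,
closed under `⊓` and `⊔`, contains `⊥` as its least element, and has a
greatest element. -/
theorem finiteBlockSystems_lattice {E : Type*} [Countable E] [Infinite E]
    (G : Subgroup (Equiv.Perm E))
    (holig : ∀ n, Finite (Quotient (permSetoid G n)))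
    (hpoly : ∃ c k : ℕ, ∀ n, profile G n ≤ c * (n + 1) ^ k) :
    (finiteBlockSystems G).Finite ∧
      (∀ r ∈ finiteBlockSystems G, ∀ s ∈ finiteBlockSystems G,
        r ⊓ s ∈ finiteBlockSystems G ∧ r ⊔ s ∈ finiteBlockSystems G) ∧
      (⊥ : Setoid E) ∈ finiteBlockSystems G ∧
      (∀ r ∈ finiteBlockSystems G, (⊥ : Setoid E) ≤ r) ∧
      (∃ m ∈ finiteBlockSystems G, ∀ r ∈ finiteBlockSystems G, r ≤ m) := by

  haveI : Finite (Quotient (permSetoid G 2)) := holig 2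
  -- finiteness
  have hfin : (finiteBlockSystems G).Finite := by
    have hsub : finiteBlockSystems G ⊆ {r : Setoid E | GInvariant G r} :=
      fun r hr => hr.1
    exact Set.Finite.of_finite_image (Set.toFinite _) (orbSet_injOn.mono hsub)
  -- closure under ⊓ and ⊔
  have hmem : ∀ r ∈ finiteBlockSystems G, ∀ s ∈ finiteBlockSystems G,
      r ⊓ s ∈ finiteBlockSystems G ∧ r ⊔ s ∈ finiteBlockSystems G := by
    rintro r ⟨hri, hrf⟩ s ⟨hsi, hsf⟩
    refine ⟨⟨?_, ?_⟩, sup_invariant hri hsi, join_classes_finite hri hrf hsi hsf⟩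
    · intro g hg x y
      exact Setoid.inf_iff_and.trans
        ((and_congr (hri g hg x y) (hsi g hg x y)).trans Setoid.inf_iff_and.symm)
    · intro x
      refine (hrf x).subset fun y hy => ?_
      exact (Setoid.inf_iff_and.mp hy).1
  -- bottom
  have hbot : (⊥ : Setoid E) ∈ finiteBlockSystems G := by
    constructor
    · intro g hg x y
      show x = y ↔ g x = g y
      exact ⟨congrArg g, fun h => g.injective h⟩
    · intro x
      have : {y | (⊥ : Setoid E).r x y} = {x} := by
        ext y
        show x = y ↔ y ∈ ({x} : Set E)
        simp [eq_comm]
      rw [this]; exact Set.finite_singleton x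
  refine ⟨hfin, hmem, hbot, fun r _ => bot_le, ?_⟩
  -- greatest element
  have hsupclosed : SupClosed (finiteBlockSystems G) :=
    fun r hr s hs => (hmem r hr s hs).2
  have htne : hfin.toFinset.Nonempty := ⟨⊥, hfin.mem_toFinset.mpr hbot⟩
  refine ⟨hfin.toFinset.sup' htne id,
    hsupclosed.finsetSup'_mem htne (fun i hi => hfin.mem_toFinset.mp hi), ?_⟩
  intro r hr
  exact Finset.le_sup' id (hfin.mem_toFinset.mpr hr)
end

section
/- Let E be a countably infinite set, let G be a P-oligomorphic group of permutations of E, and let K be a subgroup of G of finite index. If r is the greatest G-invariant setoid on E all of whose equivalence classes are finite, then r is also the greatest K-invariant setoid on E all of whose equivalence classes are finite; that is, every K-invariant setoid on E with all classes finite is ≤ r in Setoid E. -/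
/-!
Let `s` be a `K`-invariant setoid with finite classes. The translates `g⁻¹ • s`, `g ∈ G`,
depend only on the coset of `g` modulo `K`, so there are finitely many of them, and the graph whose
edges are the pairs related by some translate is `G`-invariant and locally finite. Graph distance
is invariant under `G`, and the distance between `x` and `y` is determined by the `G`-orbit of the
pair `{x, y}`; since there are finitely many such orbits, every connected component lies in a
ball of bounded radius around any of its points, hence is finite. The component setoid is thus
`G`-invariant with finite classes, so it lies below `r`, and it contains `s`.
-/

namespace SimpleGraph

section Distance

variable {V W : Type*} {H : SimpleGraph V} {H' : SimpleGraph W}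

theorem Iso.dist_apply_le (e : H ≃g H') (u v : V) : H'.dist (e u) (e v) ≤ H.dist u v := by
  by_cases huv : H.Reachable u v
  · obtain ⟨p, hp⟩ := huv.exists_walk_length_eq_dist
    calc H'.dist (e u) (e v) ≤ (p.map e.toHom).length := dist_le _
      _ = H.dist u v := by rw [Walk.length_map, hp]
  · rw [dist_eq_zero_of_not_reachable (Iso.reachable_iff.not.mpr huv)]
    exact Nat.zero_le _

theorem Iso.dist_apply (e : H ≃g H') (u v : V) : H'.dist (e u) (e v) = H.dist u v := by
  refine le_antisymm (e.dist_apply_le u v) ?_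
  simpa using e.symm.dist_apply_le (e u) (e v)

theorem finite_setOf_exists_walk_length_le (hH : ∀ v, (H.neighborSet v).Finite)
    (n : ℕ) (v : V) :
    {w | ∃ p : H.Walk v w, p.length ≤ n}.Finite := by
  induction n generalizing v with
  | zero =>
    refine (Set.finite_singleton v).subset ?_
    rintro w ⟨p, hp⟩
    exact (Walk.eq_of_length_eq_zero (Nat.le_zero.mp hp)).symm
  | succ n ih =>
    refine ((hH v).biUnion fun v' _ => ih v').insert v |>.subset ?_
    rintro w ⟨_ | ⟨hadj, q⟩, hp⟩
    · exact Set.mem_insert _ _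
    · exact Set.mem_insert_of_mem _ (Set.mem_biUnion hadj ⟨q, by simpa using hp⟩)

theorem finite_setOf_reachable_dist_le (hH : ∀ v, (H.neighborSet v).Finite) (n : ℕ) (v : V) :
    {w | H.Reachable v w ∧ H.dist v w ≤ n}.Finite := by
  refine (finite_setOf_exists_walk_length_le hH n v).subset ?_
  rintro w ⟨hvw, hn⟩
  obtain ⟨p, hp⟩ := hvw.exists_walk_length_eq_dist
  exact ⟨p, hp ▸ hn⟩

end Distance

section Invariance

variable {E : Type*} (G : Subgroup (Equiv.Perm E)) (H : SimpleGraph E)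

def AdjInvariant : Prop :=
  ∀ g ∈ G, ∀ x y : E, H.Adj (g x) (g y) ↔ H.Adj x y

variable {G H}

namespace AdjInvariant

variable {g : Equiv.Perm E}

def iso (hH : AdjInvariant G H) (hg : g ∈ G) : H ≃g H := ⟨g, hH g hg _ _⟩

theorem dist_apply (hH : AdjInvariant G H) (hg : g ∈ G) (x y : E) :
    H.dist (g x) (g y) = H.dist x y :=
  (hH.iso hg).dist_apply x y

theorem dist_eq_of_image_pair (hH : AdjInvariant G H) (hg : g ∈ G) {x y x' y' : E}
    (h : g '' {x, y} = {x', y'}) : H.dist x' y' = H.dist x y := by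
  rw [Set.image_pair] at h
  rcases Set.pair_eq_pair_iff.mp h with ⟨rfl, rfl⟩ | ⟨rfl, rfl⟩
  · exact hH.dist_apply hg x y
  · rw [dist_comm]; exact hH.dist_apply hg x y

theorem gInvariant_reachableSetoid (hH : AdjInvariant G H) :
    GInvariant G H.reachableSetoid :=
  fun _ hg _ _ => (Iso.reachable_iff (φ := hH.iso hg)).symm

theorem exists_dist_le (hH : AdjInvariant G H)
    [Finite (Quotient (permSetoid G 2))] (x : E) : ∃ N, ∀ y, H.dist x y ≤ N := by
  let pairOrbit (y : {y // y ≠ x}) : Quotient (permSetoid G 2) :=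
    ⟦⟨{x, y.1}, Set.toFinite _, Set.ncard_pair y.2.symm⟩⟧
  let d (y : {y // y ≠ x}) : ℕ := H.dist x y
  -- `d` factors through the finite set of `G`-orbits of pairs, so its range is finite.
  have hd : d.FactorsThrough pairOrbit := fun y y' h => by
    obtain ⟨g, hg, himg⟩ := Quotient.exact h
    exact (hH.dist_eq_of_image_pair hg himg).symm
  obtain ⟨N, hN⟩ := (Set.finite_range (Function.extend pairOrbit d 0)).bddAbove
  refine ⟨N, fun y => ?_⟩
  rcases eq_or_ne y x with rfl | hy
  · simp
  · exact hN ⟨pairOrbit ⟨y, hy⟩, hd.extend_apply 0 ⟨y, hy⟩⟩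

theorem finite_setOf_reachable (hH : AdjInvariant G H)
    [Finite (Quotient (permSetoid G 2))] (hfin : ∀ v, (H.neighborSet v).Finite) (x : E) :
    {y | H.Reachable x y}.Finite := by
  obtain ⟨N, hN⟩ := hH.exists_dist_le x
  exact (finite_setOf_reachable_dist_le hfin N x).subset fun y hy => ⟨hy, hN y⟩

end AdjInvariant

end Invariance

end SimpleGraph

theorem Subgroup.exists_mul_out_mem {Γ : Type*} [Group Γ] (L : Subgroup Γ) (g : Γ) :
    ∃ c : Γ ⧸ L, g * c.out ∈ L := by
  obtain ⟨h, hh⟩ := QuotientGroup.mk_out_eq_mul L g⁻¹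
  exact ⟨(g⁻¹ : Γ), by simp [hh]⟩

section translatesGraph

variable {E : Type*} (G : Subgroup (Equiv.Perm E)) (s : Setoid E)

def translatesGraph : SimpleGraph E :=
  SimpleGraph.fromRel fun x y => ∃ g ∈ G, s (g x) (g y)

theorem translatesGraph_adjInvariant : (translatesGraph G s).AdjInvariant G := by
  have key : ∀ g ∈ G, ∀ x y,
      (∃ h ∈ G, s (h (g x)) (h (g y))) ↔ ∃ h ∈ G, s (h x) (h y) :=
    fun g hg x y =>
      ⟨fun ⟨h, hh, hxy⟩ => ⟨h * g, G.mul_mem hh hg, hxy⟩,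
        fun ⟨h, hh, hxy⟩ => ⟨h * g⁻¹, G.mul_mem hh (G.inv_mem hg), by simpa using hxy⟩⟩
  intro g hg x y
  simp only [translatesGraph, SimpleGraph.fromRel_adj, g.injective.ne_iff, key g hg]

theorem le_reachableSetoid_translatesGraph : s ≤ (translatesGraph G s).reachableSetoid := by
  intro x y hxy
  rcases eq_or_ne x y with rfl | hne
  · exact SimpleGraph.Reachable.refl x
  · exact SimpleGraph.Adj.reachable ⟨hne, .inl ⟨1, G.one_mem, hxy⟩⟩

variable {G s} {K : Subgroup (Equiv.Perm E)} [(K.subgroupOf G).FiniteIndex]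

theorem finite_neighborSet_translatesGraph (hsK : GInvariant K s)
    (hsfin : ∀ x : E, {y | s.r x y}.Finite) (x : E) :
    ((translatesGraph G s).neighborSet x).Finite := by
  let b (c : G ⧸ K.subgroupOf G) : Equiv.Perm E := c.out
  refine (Set.finite_iUnion fun c => (hsfin ((b c)⁻¹ x)).image (b c)).subset ?_
  rintro y ⟨-, hxy⟩
  obtain ⟨g, hg, hgxy⟩ : ∃ g ∈ G, s (g x) (g y) :=
    hxy.elim id fun ⟨g, hg, h⟩ => ⟨g, hg, s.symm h⟩
  -- Writing `g = k * (b c)⁻¹` with `k ∈ K`, the invariance of `s` under `k` removes `k`.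
  obtain ⟨c, hc⟩ := Subgroup.exists_mul_out_mem (K.subgroupOf G) ⟨g, hg⟩
  have hk : g * b c ∈ K := hc
  refine Set.mem_iUnion.mpr ⟨c, (b c)⁻¹ y, ?_, by simp⟩
  rw [Set.mem_ofPred_eq, hsK _ hk]
  simpa using hgxy

end translatesGraph

theorem greatest_finite_block_system_of_finite_index_general {E : Type*}
    (G K : Subgroup (Equiv.Perm E)) (hKG : K ≤ G)
    (hindex : (K.subgroupOf G).index ≠ 0)
    (holig : ∀ n, Finite (Quotient (permSetoid G n)))
    (r : Setoid E) (hrG : GInvariant G r)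
    (hrmax : ∀ s : Setoid E, GInvariant G s →
      (∀ x : E, {y | s.r x y}.Finite) → s ≤ r) :
    GInvariant K r ∧
      ∀ s : Setoid E, GInvariant K s →
        (∀ x : E, {y | s.r x y}.Finite) → s ≤ r := by
  have : (K.subgroupOf G).FiniteIndex := ⟨hindex⟩
  have := holig 2
  refine ⟨fun g hg => hrG g (hKG hg), fun s hsK hsfin => ?_⟩
  have hH := translatesGraph_adjInvariant G s
  calc s ≤ (translatesGraph G s).reachableSetoid := le_reachableSetoid_translatesGraph G s
    _ ≤ r := hrmax _ hH.gInvariant_reachableSetoid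
        (hH.finite_setOf_reachable (finite_neighborSet_translatesGraph hsK hsfin))

/-- Let `G` be a P-oligomorphic group of permutations of a countably infinite
set `E` and `K ≤ G` a subgroup of finite index. If `r` is the greatest
`G`-invariant setoid on `E` with all classes finite, then `r` is also the
greatest `K`-invariant setoid on `E` with all classes finite. -/
theorem greatest_finite_block_system_of_finite_index {E : Type*}
    [Countable E] [Infinite E]
    (G K : Subgroup (Equiv.Perm E)) (hKG : K ≤ G)
    (hindex : (K.subgroupOf G).index ≠ 0)
    (holig : ∀ n, Finite (Quotient (permSetoid G n)))
    (hpoly : ∃ c k : ℕ, ∀ n, profile G n ≤ c * (n + 1) ^ k)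
    (r : Setoid E) (hrG : GInvariant G r)
    (hrfin : ∀ x : E, {y | r.r x y}.Finite)
    (hrmax : ∀ s : Setoid E, GInvariant G s →
      (∀ x : E, {y | s.r x y}.Finite) → s ≤ r) :
    GInvariant K r ∧
      ∀ s : Setoid E, GInvariant K s →
        (∀ x : E, {y | s.r x y}.Finite) → s ≤ r :=
  greatest_finite_block_system_of_finite_index_general G K hKG hindex holig r hrG hrmax
end

section
/- Let α be a finite nonempty type, let H be a normal subgroup of H0, both subgroups of Perm α, let I be a nonempty type and P a subgroup of Perm I. In Perm(α × I), let W = W(H, P) be the wreath product subgroup and let Δ(H0) = {g ∈ Perm(α × I) | ∃ h0 ∈ H0, ∀ a i, g (a, i) = (h0 a, i)} be the diagonal copy of H0. Let G be the subgroup of Perm(α × I) generated by W ∪ Δ(H0). Then: (i) W is a normal subgroup of G; (ii) every element of G can be written as w · δ with w ∈ W and δ ∈ Δ(H0); (iii) the index of W in G equals the index of H in H0. -/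
/-- The diagonal copy `Δ(H0)` of `H0 ≤ Perm α` inside `Perm (α × I)`: elements
acting by a common `h0 ∈ H0` within each block `α × {i}` and fixing all blocks. -/
def diagSubgroup (I : Type*) {α : Type*} (H0 : Subgroup (Equiv.Perm α)) :
    Subgroup (Equiv.Perm (α × I)) where
  carrier := {g | ∃ h ∈ H0, ∀ (a : α) (i : I), g (a, i) = (h a, i)}
  one_mem' := ⟨1, H0.one_mem, fun _ _ => rfl⟩
  mul_mem' := by
    rintro g g' ⟨h, hh, hg⟩ ⟨h', hh', hg'⟩
    exact ⟨h * h', H0.mul_mem hh hh', fun a i => by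
      simp [Equiv.Perm.mul_apply, hg', hg]⟩
  inv_mem' := by
    rintro g ⟨h, hh, hg⟩
    refine ⟨h⁻¹, H0.inv_mem hh, fun a i => ?_⟩
    have key : g (h⁻¹ a, i) = (a, i) := by rw [hg]; simp
    rw [← key]; simp

def diagHom (I : Type*) {α : Type*} : Equiv.Perm α →* Equiv.Perm (α × I) where
  toFun h := h.prodCongr (Equiv.refl I)
  map_one' := rfl
  map_mul' _ _ := rfl

@[simp]
theorem diagHom_apply {I α : Type*} (h : Equiv.Perm α) (a : α) (i : I) :
    diagHom I h (a, i) = (h a, i) :=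
  rfl

theorem diagHom_injective (I : Type*) [Nonempty I] {α : Type*} :
    Function.Injective (diagHom I (α := α)) := by
  intro h h' hhh
  obtain ⟨i⟩ := ‹Nonempty I›
  ext a
  simpa using congrArg (fun e : Equiv.Perm (α × I) => (e (a, i)).1) hhh

theorem diagSubgroup_eq_map (I : Type*) {α : Type*} (K : Subgroup (Equiv.Perm α)) :
    diagSubgroup I K = K.map (diagHom I) := by
  ext g
  constructor
  · rintro ⟨h, hh, hg⟩
    exact ⟨h, hh, Equiv.ext fun ⟨a, i⟩ => (hg a i).symm⟩
  · rintro ⟨h, hh, rfl⟩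
    exact ⟨h, hh, diagHom_apply h⟩

theorem relIndex_diagSubgroup (I : Type*) [Nonempty I] {α : Type*}
    (H K : Subgroup (Equiv.Perm α)) :
    (diagSubgroup I H).relIndex (diagSubgroup I K) = H.relIndex K := by
  rw [diagSubgroup_eq_map, diagSubgroup_eq_map,
    Subgroup.relIndex_map_map_of_injective _ _ (diagHom_injective I)]

theorem diagSubgroup_le_normalizer_wreath {α I : Type*} {H H0 : Subgroup (Equiv.Perm α)}
    (hH0 : H0 ≤ Subgroup.normalizer H) (P : Subgroup (Equiv.Perm I)) :
    diagSubgroup I H0 ≤ Subgroup.normalizer (wreath H P) := by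
  rw [diagSubgroup_eq_map, Subgroup.le_normalizer_iff]
  rintro _ ⟨h0, hh0, rfl⟩ w ⟨σ, hσ, h, hh, hw⟩
  refine ⟨σ, hσ, fun i => h0 * h i * h0⁻¹,
    fun i => Subgroup.le_normalizer_iff.mp hH0 h0 hh0 _ (hh i), fun a i => ?_⟩
  simp only [Equiv.Perm.mul_apply, ← map_inv, diagHom_apply, hw]

theorem wreath_inf_diagSubgroup {α I : Type*} [Nonempty I] (H H0 : Subgroup (Equiv.Perm α))
    (P : Subgroup (Equiv.Perm I)) :
    wreath H P ⊓ diagSubgroup I H0 = diagSubgroup I (H ⊓ H0) := by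
  ext g
  constructor
  · rintro ⟨⟨σ, -, h, hh, hw⟩, ⟨h0, hh0, hδ⟩⟩
    obtain ⟨i⟩ := ‹Nonempty I›
    have hh0i : h0 = h i := Equiv.ext fun a => congrArg Prod.fst ((hδ a i).symm.trans (hw a i))
    exact ⟨h0, ⟨hh0i ▸ hh i, hh0⟩, hδ⟩
  · rintro ⟨h, ⟨hH, hH0⟩, hg⟩
    exact ⟨⟨1, P.one_mem, fun _ => h, fun _ => hH, hg⟩, ⟨h, hH0, hg⟩⟩

theorem Subgroup.relIndex_sup_left_of_le_normalizer {G : Type*} [Group G] {H N : Subgroup G}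
    (hLE : H ≤ normalizer N) : N.relIndex (H ⊔ N) = N.relIndex H :=
  letI := normal_subgroupOf_of_le_normalizer hLE
  letI := normal_subgroupOf_sup_of_le_normalizer hLE
  (Nat.card_congr (QuotientGroup.quotientInfEquivProdNormalizerQuotient H N hLE).toEquiv).symm

theorem wreath_join_diagonal_general (α : Type*)
    (H H0 : Subgroup (Equiv.Perm α)) (hle : H ≤ H0)
    (hnorm : ∀ h0 ∈ H0, ∀ h ∈ H, h0 * h * h0⁻¹ ∈ H)
    (I : Type*) [Nonempty I] (P : Subgroup (Equiv.Perm I)) :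
    (∀ g ∈ wreath H P ⊔ diagSubgroup I H0, ∀ w ∈ wreath H P,
        g * w * g⁻¹ ∈ wreath H P) ∧
      (∀ g ∈ wreath H P ⊔ diagSubgroup I H0,
        ∃ w ∈ wreath H P, ∃ δ ∈ diagSubgroup I H0, g = w * δ) ∧
      ((wreath H P).subgroupOf (wreath H P ⊔ diagSubgroup I H0)).index
        = (H.subgroupOf H0).index := by
  have hΔ := diagSubgroup_le_normalizer_wreath (Subgroup.le_normalizer_iff.mpr hnorm) P
  have hG : wreath H P ⊔ diagSubgroup I H0 ≤ Subgroup.normalizer (wreath H P) :=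
    sup_le Subgroup.le_normalizer hΔ
  refine ⟨fun g hg w hw => (Subgroup.mem_normalizer_iff.mp (hG hg) w).mp hw, ?_, ?_⟩
  · intro g hg
    rw [← SetLike.mem_coe, Subgroup.coe_mul_of_right_le_normalizer_left _ _ hΔ] at hg
    obtain ⟨w, hw, δ, hδ, rfl⟩ := hg
    exact ⟨w, hw, δ, hδ, rfl⟩
  · calc (wreath H P).relIndex (wreath H P ⊔ diagSubgroup I H0)
        = (wreath H P).relIndex (diagSubgroup I H0) := by
          rw [sup_comm, Subgroup.relIndex_sup_left_of_le_normalizer hΔ]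
      _ = (wreath H P ⊓ diagSubgroup I H0).relIndex (diagSubgroup I H0) :=
          (Subgroup.inf_relIndex_right _ _).symm
      _ = H.relIndex H0 := by
          rw [wreath_inf_diagSubgroup, inf_of_le_left hle, relIndex_diagSubgroup]

/-- Let `H ⊴ H0 ≤ Perm α` with `α` finite nonempty, `P ≤ Perm I` with `I`
nonempty, `W = W(H, P)` the wreath product and `Δ(H0)` the diagonal copy of
`H0`, and let `G = ⟨W ∪ Δ(H0)⟩`. Then `W ⊴ G`, every element of `G` is a
product `w * δ` with `w ∈ W` and `δ ∈ Δ(H0)`, and `[G : W] = [H0 : H]`. -/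
theorem wreath_join_diagonal (α : Type*) [Finite α] [Nonempty α]
    (H H0 : Subgroup (Equiv.Perm α)) (hle : H ≤ H0)
    (hnorm : ∀ h0 ∈ H0, ∀ h ∈ H, h0 * h * h0⁻¹ ∈ H)
    (I : Type*) [Nonempty I] (P : Subgroup (Equiv.Perm I)) :
    (∀ g ∈ wreath H P ⊔ diagSubgroup I H0, ∀ w ∈ wreath H P,
        g * w * g⁻¹ ∈ wreath H P) ∧
      (∀ g ∈ wreath H P ⊔ diagSubgroup I H0,
        ∃ w ∈ wreath H P, ∃ δ ∈ diagSubgroup I H0, g = w * δ) ∧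
      ((wreath H P).subgroupOf (wreath H P ⊔ diagSubgroup I H0)).index
        = (H.subgroupOf H0).index :=
  wreath_join_diagonal_general α H H0 hle hnorm I P
end

section
/- Let α be a finite nonempty type and let G be a block-preserving subgroup of Perm(α × ℕ) such that the induced homomorphism G → Perm ℕ, g ↦ ḡ, is surjective. Then for every finite subset S of ℕ and every permutation τ of ℕ fixing every element of S, there exists g ∈ G such that g (a, i) = (a, i) for all a ∈ α and all i ∈ S, and such that ḡ = τ. (The fixator of finitely many blocks still induces the full symmetric group on the remaining blocks.) -/
/-!
Raising an element of `G` that induces `ρ` to the power `M = |Perm α|` makes it act trivially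
on every block fixed by `ρ`. So the elements of `G` fixing the blocks of `S` induce every `M`-th
power of a permutation fixing `S`, and it suffices that `M`-th powers generate `Sym(ℕ ∖ S) ≅ Sym(ℕ)`.

A commutator `[a ^ M, d] = a ^ M * (d * a⁻¹ * d⁻¹) ^ M` is a product of two `M`-th powers.
A permutation with infinitely many fixed points is conjugate to `σ` acting on the layer `0` of
`ℤ × Z` only, which is the commutator of the `M`-th power of the layer shift with the permutation
acting by `σ` on the layers `n < 0` with `M ∣ n` (a swindle). Finally, every permutation of an
infinite set is a product of two permutations with infinitely many fixed points.
-/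

open Equiv Equiv.Perm Subgroup

section PowerClosure

variable {G H : Type*} [Group G] [Group H] {M : ℕ}

theorem commutator_pow_left_mem_closure_range_pow (a d : G) :
    a ^ M * d * (a ^ M)⁻¹ * d⁻¹ ∈ closure (Set.range fun g : G => g ^ M) := by
  have h : a ^ M * d * (a ^ M)⁻¹ * d⁻¹ = a ^ M * (d * a⁻¹ * d⁻¹) ^ M := by
    rw [conj_pow, inv_pow]; group
  rw [h]
  exact mul_mem (subset_closure ⟨a, rfl⟩) (subset_closure ⟨_, rfl⟩)

theorem MonoidHom.map_mem_closure_range_pow (f : G →* H) {g : G}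
    (hg : g ∈ closure (Set.range fun g : G => g ^ M)) :
    f g ∈ closure (Set.range fun h : H => h ^ M) := by
  refine closure_mono ?_ ((MonoidHom.map_closure f _).le (mem_map_of_mem f hg))
  rintro _ ⟨_, ⟨g, rfl⟩, rfl⟩
  exact ⟨f g, (map_pow f g M).symm⟩

end PowerClosure

section PermutationsOfInfiniteSets

variable {X Z : Type*} {M : ℕ}

theorem exists_int_prod_equiv [Countable X] (p : X → Prop) [DecidablePred p]
    [Nonempty (Subtype p)] (hp : {x | ¬ p x}.Infinite) :
    ∃ e : ℤ × Subtype p ≃ X, (∀ z, e (0, z) = z) ∧ ∀ n ≠ 0, ∀ z, ¬ p (e (n, z)) := by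
  have : Infinite {n : ℤ // n ≠ 0} := (Set.finite_singleton 0).infinite_compl.to_subtype
  have : Infinite {x // ¬ p x} := hp.to_subtype
  obtain ⟨f⟩ := nonempty_equiv_of_countable (α := {n : ℤ // n ≠ 0} × Subtype p) (β := {x // ¬ p x})
  refine ⟨((optionSubtypeNe 0).symm.prodCongr (Equiv.refl _)).trans
    (optionProdEquiv.trans ((sumCongr (Equiv.refl _) f).trans (sumCompl p))), fun z => ?_,
    fun n hn z => ?_⟩
  · simp
  · simpa [optionSubtypeNe_symm_of_ne hn] using (f (⟨n, hn⟩, z)).2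

namespace Equiv.Perm

theorem prodCongr_addRight_pow_apply (k : ℕ) (n : ℤ) (z : Z) :
    ((prodCongr (Equiv.addRight 1) (Equiv.refl Z) : Perm (ℤ × Z)) ^ k) (n, z) = (n + k, z) := by
  induction k with
  | zero => simp
  | succ k ih => rw [pow_succ', mul_apply, ih]; simp [add_assoc]

theorem prodExtendRight_zero_mem_closure_range_pow (hM : 0 < M) (σ : Perm Z) :
    prodExtendRight (0 : ℤ) σ ∈ closure (Set.range fun g : Perm (ℤ × Z) => g ^ M) := by
  classical
  let shift : Perm (ℤ × Z) := prodCongr (Equiv.addRight 1) (Equiv.refl Z)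
  let P : ℤ → Prop := fun n => n < 0 ∧ (M : ℤ) ∣ n
  let d : Perm (ℤ × Z) := prodCongrRight fun n => if P n then σ else 1
  suffices h : prodExtendRight 0 σ = shift ^ M * d * (shift ^ M)⁻¹ * d⁻¹ by
    rw [h]; exact commutator_pow_left_mem_closure_range_pow shift d
  have hP : ∀ n ≠ 0, P (n - M) ↔ P n := by
    intro n hn
    simp only [P, dvd_sub_self_right]
    refine ⟨fun ⟨hlt, hdvd⟩ => ⟨?_, hdvd⟩, fun ⟨hlt, hdvd⟩ => ⟨by omega, hdvd⟩⟩
    by_contra hle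
    exact hn (Int.eq_zero_of_dvd_of_nonneg_of_lt (by omega) (by omega) hdvd)
  have hinv : ∀ p : ℤ × Z, (shift ^ M)⁻¹ p = (p.1 - M, p.2) := fun p => by
    rw [Perm.inv_eq_iff_eq, prodCongr_addRight_pow_apply]; simp
  have hd : ∀ p : ℤ × Z, d p = (p.1, (if P p.1 then σ else 1) p.2) := fun _ => rfl
  have hdinv : ∀ p : ℤ × Z, d⁻¹ p = (p.1, (if P p.1 then σ⁻¹ else 1) p.2) := fun p => by
    rw [Perm.inv_eq_iff_eq, hd]; split_ifs <;> simp
  ext ⟨n, z⟩ : 1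
  rw [mul_apply, mul_apply, mul_apply, hdinv, hinv, hd, prodCongr_addRight_pow_apply]
  simp only [sub_add_cancel]
  by_cases hn : n = 0
  · subst hn
    simp [P, hM]
  · rw [prodExtendRight_apply_ne (e := σ) hn]
    by_cases hPn : P n <;> simp [hPn, hP n hn]

theorem mem_closure_range_pow_of_infinite_fixedPoints [Countable X] (hM : 0 < M) {ψ : Perm X}
    (hψ : {x | ψ x = x}.Infinite) : ψ ∈ closure (Set.range fun g : Perm X => g ^ M) := by
  classical
  rcases isEmpty_or_nonempty {x // ψ x ≠ x} with h | h
  · have : ψ = 1 := by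
      ext x
      by_contra hx
      exact h.false ⟨x, hx⟩
    rw [this]; exact one_mem _
  obtain ⟨e, he0, hene⟩ := exists_int_prod_equiv (fun x => ψ x ≠ x) (by simpa using hψ)
  let σ : Perm {x // ψ x ≠ x} := ψ.subtypePerm fun x => ψ.injective.ne_iff
  have hψe : ∀ p, ψ (e p) = e (prodExtendRight 0 σ p) := by
    rintro ⟨n, z⟩
    by_cases hn : n = 0
    · subst hn; simp [he0, σ]
    · rw [prodExtendRight_apply_ne (e := σ) hn]; simpa using hene n hn z
  have : ψ = e.permCongrHom (prodExtendRight 0 σ) := by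
    ext x
    obtain ⟨p, rfl⟩ := e.surjective x
    simp [hψe, permCongr_apply]
  rw [this]
  exact MonoidHom.map_mem_closure_range_pow (e.permCongrHom : Perm (ℤ × _) →* Perm X)
    (prodExtendRight_zero_mem_closure_range_pow hM σ)

theorem exists_apply_eq_symm_apply_of_disjoint (π : Perm X) {A : Set X}
    (hA : ∀ a ∈ A, π.symm a ∉ A) :
    ∃ ν : Perm X, (∀ a ∈ A, ν a = π.symm a) ∧ ∀ x ∉ A, π x ∉ A → ν x = x := by
  classical
  let f : X → X := fun x => if x ∈ A then π.symm x else if π x ∈ A then π x else x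
  have hf : Function.Involutive f := by
    intro x
    by_cases hx : x ∈ A
    · simp [f, hx, hA x hx]
    · by_cases hπx : π x ∈ A <;> simp [f, hx, hπx]
  exact ⟨hf.toPerm f, fun a ha => by simp [f, ha], fun x hx hπx => by simp [f, hx, hπx]⟩

theorem exists_injective_seq_apply_ne {π : Perm X} (hπ : {x | π x ≠ x}.Infinite) :
    ∃ x : ℕ → X, Function.Injective x ∧ ∀ j k, π (x j) ≠ x k := by
  classical
  obtain ⟨x, hxπ, hsep⟩ := exists_seq_of_forall_finset_exists (· ∈ {x | π x ≠ x})
    (fun u v => v ≠ u ∧ π u ≠ v ∧ π v ≠ u) fun s _ => by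
      obtain ⟨y, hy, hys⟩ := hπ.exists_notMem_finset (s ∪ s.image π ∪ s.image π.symm)
      simp only [Finset.mem_union, Finset.mem_image, not_or, not_exists, not_and] at hys
      exact ⟨y, hy, fun u hu => ⟨fun h => hys.1.1 (h ▸ hu), hys.1.2 u hu,
        fun h => hys.2 u hu (by rw [← h, symm_apply_apply])⟩⟩
  refine ⟨x, fun j k hjk => ?_, fun j k => ?_⟩
  · by_contra hne
    rcases lt_or_gt_of_ne hne with h | h
    · exact (hsep j k h).1 hjk.symm
    · exact (hsep k j h).1 hjk
  · rcases lt_trichotomy j k with h | rfl | h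
    · exact (hsep j k h).2.1
    · exact hxπ j
    · exact (hsep k j h).2.2

theorem exists_infinite_fixedPoints_mul [Infinite X] (π : Perm X) :
    ∃ ν : Perm X, {x | ν x = x}.Infinite ∧ {x | (π * ν) x = x}.Infinite := by
  by_cases hfix : {x | π x = x}.Infinite
  · exact ⟨1, by simpa using Set.infinite_univ, by simpa using hfix⟩
  obtain ⟨x, hinj, hπx⟩ := exists_injective_seq_apply_ne (π := π) <| by
    simpa [Set.compl_ofPred] using (Set.not_infinite.1 hfix).infinite_compl
  -- `ν` swaps each `x (2 * k)` with its preimage under `π`, and fixes every `x (2 * k + 1)`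
  obtain ⟨ν, hνA, hνfix⟩ := π.exists_apply_eq_symm_apply_of_disjoint
    (A := Set.range fun k => x (2 * k)) (by
      rintro _ ⟨j, rfl⟩ ⟨k, hk⟩
      exact hπx (2 * k) (2 * j) (by simp only at hk; rw [hk, apply_symm_apply]))
  refine ⟨ν, (Set.infinite_range_of_injective (f := fun k => x (2 * k + 1))
    (hinj.comp fun j k h => by simpa using h)).mono ?_,
    (Set.infinite_range_of_injective (f := fun k => x (2 * k))
    (hinj.comp fun j k h => by simpa using h)).mono ?_⟩
  · rintro _ ⟨k, rfl⟩
    refine hνfix _ (fun ⟨j, hj⟩ => ?_) fun ⟨j, hj⟩ => hπx _ _ hj.symm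
    have := hinj hj
    omega
  · rintro _ ⟨k, rfl⟩
    simp [hνA _ ⟨k, rfl⟩]

theorem closure_range_pow_eq_top [Countable X] [Infinite X] (hM : 0 < M) :
    closure (Set.range fun σ : Perm X => σ ^ M) = ⊤ := by
  refine eq_top_iff.2 fun π _ => ?_
  obtain ⟨ν, hν, hπν⟩ := exists_infinite_fixedPoints_mul π
  simpa using mul_mem (mem_closure_range_pow_of_infinite_fixedPoints hM hπν)
    (inv_mem (mem_closure_range_pow_of_infinite_fixedPoints hM hν))

end Equiv.Perm

end PermutationsOfInfiniteSets

section Blocks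

variable {α : Type*}

def InducesOnBlocks (g : Perm (α × ℕ)) (ρ : Perm ℕ) : Prop :=
  ∀ (a : α) (i : ℕ), (g (a, i)).2 = ρ i

namespace InducesOnBlocks

variable {g h : Perm (α × ℕ)} {ρ σ : Perm ℕ}

theorem apply_eq (hg : InducesOnBlocks g ρ) (x : α × ℕ) : g x = ((g x).1, ρ x.2) :=
  Prod.ext rfl (hg x.1 x.2)

theorem mul (hg : InducesOnBlocks g ρ) (hh : InducesOnBlocks h σ) :
    InducesOnBlocks (g * h) (ρ * σ) := fun a i => by
  rw [mul_apply, hh.apply_eq, hg]; rfl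

theorem inv (hg : InducesOnBlocks g ρ) : InducesOnBlocks g⁻¹ ρ⁻¹ := fun a i => by
  rw [Perm.eq_inv_iff_eq, ← hg, Prod.mk.eta]; simp

theorem pow (hg : InducesOnBlocks g ρ) (n : ℕ) : InducesOnBlocks (g ^ n) (ρ ^ n) := by
  induction n with
  | zero => exact fun _ _ => rfl
  | succ n ih => rw [pow_succ, pow_succ]; exact ih.mul hg

theorem pow_card_perm_apply [Finite α] (hg : InducesOnBlocks g ρ) {i : ℕ} (hi : ρ i = i)
    (a : α) : (g ^ Nat.card (Perm α)) (a, i) = (a, i) := by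
  have hblock : ∀ x : α × ℕ, (g x).2 = i ↔ x.2 = i := fun x => by
    rw [hg x.1 x.2, ← hi, ρ.injective.eq_iff, hi]
  let e : {x : α × ℕ // x.2 = i} ≃ α :=
    { toFun := fun x => x.1.1
      invFun := fun a => ⟨(a, i), rfl⟩
      left_inv := fun ⟨⟨_, _⟩, h⟩ => by subst h; rfl
      right_inv := fun _ => rfl }
  have hcard : Nat.card (Perm {x : α × ℕ // x.2 = i}) = Nat.card (Perm α) :=
    Nat.card_congr e.permCongr
  have := congrArg (fun σ : Perm {x : α × ℕ // x.2 = i} => (σ ⟨(a, i), rfl⟩ : α × ℕ))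
    (pow_card_eq_one' (x := g.subtypePerm hblock))
  simpa [hcard, subtypePerm_pow] using this

end InducesOnBlocks

def inducedOnFixedBlocks (G : Subgroup (Perm (α × ℕ))) (S : Set ℕ) : Subgroup (Perm ℕ) where
  carrier := {ρ | ∃ g ∈ G, (∀ (a : α), ∀ i ∈ S, g (a, i) = (a, i)) ∧ InducesOnBlocks g ρ}
  one_mem' := ⟨1, G.one_mem, fun _ _ _ => rfl, fun _ _ => rfl⟩
  mul_mem' := by
    rintro _ _ ⟨g, hgG, hgS, hg⟩ ⟨h, hhG, hhS, hh⟩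
    exact ⟨g * h, G.mul_mem hgG hhG, fun a i hi => by rw [mul_apply, hhS a i hi, hgS a i hi],
      hg.mul hh⟩
  inv_mem' := by
    rintro _ ⟨g, hgG, hgS, hg⟩
    exact ⟨g⁻¹, G.inv_mem hgG, fun a i hi => by rw [Perm.inv_eq_iff_eq, hgS a i hi], hg.inv⟩

end Blocks

theorem fixator_acts_fully_on_remaining_blocks_general
    (α : Type*) [Finite α]
    (G : Subgroup (Equiv.Perm (α × ℕ)))
    (hsurj : ∀ τ : Equiv.Perm ℕ, ∃ g ∈ G, ∀ (a : α) (i : ℕ), (g (a, i)).2 = τ i) :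
    ∀ (S : Finset ℕ) (τ : Equiv.Perm ℕ), (∀ i ∈ S, τ i = i) →
      ∃ g ∈ G, (∀ (a : α), ∀ i ∈ S, g (a, i) = (a, i)) ∧
        ∀ (a : α) (i : ℕ), (g (a, i)).2 = τ i := by
  intro S τ hτ
  have hpow : ∀ ρ : Perm {n // n ∉ S},
      ofSubtype ρ ^ Nat.card (Perm α) ∈ inducedOnFixedBlocks G S := by
    intro ρ
    obtain ⟨g, hgG, hg⟩ := hsurj (ofSubtype ρ)
    exact ⟨g ^ Nat.card (Perm α), pow_mem hgG _, fun a i hi =>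
      InducesOnBlocks.pow_card_perm_apply hg (ofSubtype_apply_of_not_mem ρ (not_not.2 hi)) a,
      InducesOnBlocks.pow hg _⟩
  have hle : closure (Set.range fun ρ : Perm {n // n ∉ S} => ρ ^ Nat.card (Perm α)) ≤
      (inducedOnFixedBlocks G S).comap ofSubtype :=
    (closure_le _).2 (Set.range_subset_iff.2 fun ρ => by simpa using hpow ρ)
  have : Infinite {n // n ∉ S} := S.finite_toSet.infinite_compl.to_subtype
  have hτS : ∀ n, τ n ∉ S ↔ n ∉ S := fun n =>
    ⟨fun hn hnS => hn (by rwa [hτ n hnS]), fun hn hnS => hn (by rwa [← τ.injective (hτ _ hnS)])⟩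
  have hτH : τ ∈ inducedOnFixedBlocks G S := by
    rw [← ofSubtype_subtypePerm (p := (· ∉ S)) hτS fun n hn hnS => hn (hτ n hnS)]
    exact hle (by rw [closure_range_pow_eq_top Nat.card_pos]; exact mem_top _)
  exact hτH

/-- Let `α` be a finite nonempty type and `G ≤ Perm (α × ℕ)` a block-preserving
group (each `g ∈ G` induces a permutation of the block indices) inducing the
full symmetric group on the set of blocks. Then for every finite set `S` of
block indices and every permutation `τ` of `ℕ` fixing `S` pointwise, some
`g ∈ G` fixes the blocks indexed by `S` pointwise and induces `τ` on the
blocks. -/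
theorem fixator_acts_fully_on_remaining_blocks
    (α : Type*) [Finite α] [Nonempty α]
    (G : Subgroup (Equiv.Perm (α × ℕ)))
    (hbp : ∀ g ∈ G, ∃ σ : Equiv.Perm ℕ, ∀ (a : α) (i : ℕ), (g (a, i)).2 = σ i)
    (hsurj : ∀ τ : Equiv.Perm ℕ, ∃ g ∈ G, ∀ (a : α) (i : ℕ), (g (a, i)).2 = τ i) :
    ∀ (S : Finset ℕ) (τ : Equiv.Perm ℕ), (∀ i ∈ S, τ i = i) →
      ∃ g ∈ G, (∀ (a : α), ∀ i ∈ S, g (a, i) = (a, i)) ∧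
        ∀ (a : α) (i : ℕ), (g (a, i)).2 = τ i :=
  fixator_acts_fully_on_remaining_blocks_general α G hsurj
end

section
/- Let α be a finite nonempty type and let G be a closed, block-preserving subgroup of Perm(α × ℕ) such that the induced homomorphism G → Perm ℕ, g ↦ ḡ, is surjective. Then there exists a family of bijections e : ℕ → (α ≃ α) such that for every permutation π of ℕ, the permutation of α × ℕ sending (a, i) to (e (π i) ((e i)⁻¹ a), π i) belongs to G. (Equivalently, after re-enumerating the elements within each block, G contains the subgroup Id_α ≀ Sym(ℕ) of all permutations of the form (a, i) ↦ (a, π i).) -/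
/-!
Closedness of `G` and finiteness of `α` make `G` compact over each block permutation: elements of
`G` whose block permutations converge pointwise have a limit point in `G` (an ultrafilter limit).
For finite `J`, `Sym(ℕ)` is covered by the countably many closed sets of block permutations having
a lift in `G` with a prescribed action on `α × J`; by the Baire category theorem one of them
contains a basic open set, so lifts of the permutations fixing a large finite set can be chosen to
fix `α × J` pointwise. Conjugating by lifts, any block can then be moved onto any other by an
element of `G` fixing finitely many prescribed blocks, and a compactness argument turns these
moves into coordinates `e` in which the move from block `p` to block `q` is `e q ∘ (e p)⁻¹`.
In these coordinates every transposition of blocks is a limit of products of three moves, hence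
lies in `G`; finitary permutations approximate all of `Sym(ℕ)`, and closedness concludes.
-/

open Equiv Filter Topology

theorem Ultrafilter.exists_forall_eventually_eq_of_finite {ι κ β : Type*} [Finite β]
    (u : Ultrafilter ι) (f : ι → κ → β) : ∃ e : κ → β, ∀ k, ∀ᶠ n in u, f n k = e k := by
  choose e he using fun k => (u.map (f · k)).eq_pure_of_finite
  exact ⟨e, fun k => show {e k} ∈ u.map (f · k) by rw [he k]; exact Set.mem_singleton _⟩

theorem Equiv.Perm.exists_mem_forall_eq_of_forall_swap_mem {β : Type*} [DecidableEq β]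
    {H : Subgroup (Perm β)} (hH : ∀ x y, swap x y ∈ H) (π : Perm β) (s : Finset β) :
    ∃ σ ∈ H, ∀ x ∈ s, σ x = π x := by
  induction s using Finset.induction_on with
  | empty => exact ⟨1, one_mem H, by simp⟩
  | insert x s hx ih =>
    obtain ⟨σ, hσ, hσπ⟩ := ih
    refine ⟨swap (σ x) (π x) * σ, mul_mem (hH _ _) hσ, ?_⟩
    refine (Finset.forall_mem_insert _ _ _).2 ⟨swap_apply_left _ _, fun y hy => ?_⟩
    have hyx : y ≠ x := fun h => hx (h ▸ hy)
    rw [Perm.mul_apply, hσπ y hy, swap_apply_of_ne_of_ne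
      (hσπ y hy ▸ σ.injective.ne hyx.symm).symm (π.injective.ne hyx)]

namespace BlockPerm

def permPair (π : Perm ℕ) : (ℕ → ℕ) × (ℕ → ℕ) := (π, ⇑π⁻¹)

/-- Pointwise convergence of `π` and `π⁻¹`: this makes `Perm ℕ` a closed subspace of the Polish
space `(ℕ → ℕ) × (ℕ → ℕ)`, hence a Baire space. -/
abbrev pointwiseTopology : TopologicalSpace (Perm ℕ) := .induced permPair inferInstance

attribute [local instance] pointwiseTopology

theorem range_permPair :
    Set.range permPair = {p | ∀ i j, (p.2 i = j → p.1 j = i) ∧ (p.1 i = j → p.2 j = i)} := by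
  ext p
  constructor
  · rintro ⟨π, rfl⟩ i j
    exact ⟨fun h => by simp [permPair, ← h], fun h => by simp [permPair, ← h]⟩
  · intro hp
    exact ⟨⟨p.1, p.2, fun i => (hp i _).2 rfl, fun i => (hp i _).1 rfl⟩, rfl⟩

theorem isClosedEmbedding_permPair : IsClosedEmbedding permPair where
  eq_induced := rfl
  injective _ _ h := Equiv.ext (congrFun (congrArg Prod.fst h))
  isClosed_range := by
    have hclosed (i j : ℕ) : IsClosed
        {p : (ℕ → ℕ) × (ℕ → ℕ) | (p.2 i = j → p.1 j = i) ∧ (p.1 i = j → p.2 j = i)} :=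
      (isClosed_discrete
        {x : ℕ × ℕ × ℕ × ℕ | (x.1 = j → x.2.1 = i) ∧ (x.2.2.1 = j → x.2.2.2 = i)}).preimage
        (by fun_prop : Continuous fun p : (ℕ → ℕ) × (ℕ → ℕ) => (p.2 i, p.1 j, p.1 i, p.2 j))
    simpa only [range_permPair, Set.ofPred_forall] using
      isClosed_iInter fun i => isClosed_iInter (hclosed i)

instance : BaireSpace (Perm ℕ) :=
  haveI := isClosedEmbedding_permPair.polishSpace
  inferInstance

theorem exists_finset_forall_mem_of_mem_interior {A : Set (Perm ℕ)} {π₀ : Perm ℕ}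
    (h : π₀ ∈ interior A) :
    ∃ F : Finset ℕ, ∀ π : Perm ℕ, (∀ i ∈ F, π i = π₀ i ∧ π⁻¹ i = π₀⁻¹ i) → π ∈ A := by
  rw [mem_interior_iff_mem_nhds, nhds_induced, mem_comap] at h
  obtain ⟨t, ht, htA⟩ := h
  rw [nhds_prod_eq, mem_prod_iff] at ht
  obtain ⟨t₁, ht₁, t₂, ht₂, ht⟩ := ht
  rw [nhds_pi, mem_pi] at ht₁ ht₂
  obtain ⟨I₁, hI₁, s₁, hs₁, hst₁⟩ := ht₁
  obtain ⟨I₂, hI₂, s₂, hs₂, hst₂⟩ := ht₂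
  refine ⟨hI₁.toFinset ∪ hI₂.toFinset, fun π hπ =>
    htA (ht ⟨hst₁ fun i hi => ?_, hst₂ fun i hi => ?_⟩)⟩
  · have := mem_of_mem_nhds (hs₁ i)
    simp only [permPair] at this ⊢
    rwa [(hπ i (by simp [hi])).1]
  · have := mem_of_mem_nhds (hs₂ i)
    simp only [permPair] at this ⊢
    rwa [(hπ i (by simp [hi])).2]

theorem eventually_apply_eq_of_le_nhds {u : Filter (Perm ℕ)} {π : Perm ℕ} (h : u ≤ 𝓝 π)
    (i : ℕ) : ∀ᶠ σ in u, σ i = π i := by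
  have hc : Continuous fun σ : Perm ℕ => σ i :=
    (continuous_apply i).comp (continuous_fst.comp (continuous_induced_dom (f := permPair)))
  exact (hc.tendsto π).mono_left h (isOpen_discrete {π i} |>.mem_nhds rfl)

variable {α : Type*}

def IsLift (g : Perm (α × ℕ)) (π : Perm ℕ) : Prop := ∀ a i, (g (a, i)).2 = π i

def FixesBlocks (g : Perm (α × ℕ)) (J : Set ℕ) : Prop := ∀ j ∈ J, ∀ a, g (a, j) = (a, j)

def IsPointwiseClosed {β : Type*} (G : Subgroup (Perm β)) : Prop :=
  ∀ σ : Perm β, (∀ s : Finset β, ∃ g ∈ G, ∀ x ∈ s, g x = σ x) → σ ∈ G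

namespace IsLift

variable {g h : Perm (α × ℕ)} {π ρ : Perm ℕ}

theorem snd (hg : IsLift g π) (x : α × ℕ) : (g x).2 = π x.2 := hg x.1 x.2

theorem mul (hg : IsLift g π) (hh : IsLift h ρ) : IsLift (g * h) (π * ρ) := fun a i => by
  simp [hg.snd, hh a i]

theorem inv (hg : IsLift g π) : IsLift g⁻¹ π⁻¹ := fun a i => by
  rw [Perm.eq_inv_iff_eq, ← hg.snd]
  simp

end IsLift

namespace FixesBlocks

variable {g h : Perm (α × ℕ)} {J : Set ℕ}

theorem mono (hg : FixesBlocks g J) {J' : Set ℕ} (h : J' ⊆ J) : FixesBlocks g J' :=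
  fun j hj => hg j (h hj)

theorem mul (hg : FixesBlocks g J) (hh : FixesBlocks h J) : FixesBlocks (g * h) J :=
  fun j hj a => by simp [hh j hj a, hg j hj a]

theorem inv (hg : FixesBlocks g J) : FixesBlocks g⁻¹ J :=
  fun j hj a => by rw [Perm.inv_eq_iff_eq, hg j hj a]

theorem conj {t : Perm (α × ℕ)} {τ : Perm ℕ} (ht : IsLift t τ) (hτ : ∀ j ∈ J, τ j = j)
    (hg : FixesBlocks g J) : FixesBlocks (t * g * t⁻¹) J := fun j hj a => by
  have : t⁻¹ (a, j) = ((t⁻¹ (a, j)).1, j) := by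
    ext
    · rfl
    · rw [ht.inv.snd, Perm.inv_eq_iff_eq, hτ j hj]
  rw [Perm.mul_apply, Perm.mul_apply, this, hg j hj, ← this]
  simp

end FixesBlocks

def IsCoherent (G : Subgroup (Perm (α × ℕ))) (e : ℕ → α ≃ α) : Prop :=
  ∀ p q N : ℕ, ∃ g ∈ G, FixesBlocks g (Set.Iio N \ {p, q}) ∧
    ∀ a, g (a, p) = (e q ((e p).symm a), q)

section Finite

variable [Finite α]

theorem exists_equiv_of_forall_snd_eq {g : Perm (α × ℕ)} {p q : ℕ}
    (h : ∀ a, (g (a, p)).2 = q) : ∃ f : α ≃ α, ∀ a, g (a, p) = (f a, q) := by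
  have hinj : Function.Injective fun a => (g (a, p)).1 := fun a b hab => by
    simpa using g.injective (Prod.ext hab (by rw [h, h]))
  exact ⟨.ofBijective _ (Finite.injective_iff_bijective.1 hinj), fun a => Prod.ext rfl (h a)⟩

theorem surjective_of_injective_of_snd_eq {f : α × ℕ → α × ℕ} {π : Perm ℕ}
    (hf : Function.Injective f) (hπ : ∀ x, (f x).2 = π x.2) : Function.Surjective f := by
  rintro ⟨b, j⟩
  have hinj : Function.Injective fun a => (f (a, π.symm j)).1 := fun a a' h => by
    simpa using hf (Prod.ext h (by rw [hπ, hπ]))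
  obtain ⟨a, ha⟩ := Finite.surjective_of_injective hinj b
  exact ⟨(a, π.symm j), Prod.ext ha (by simp [hπ])⟩

theorem exists_isLift_mem_of_eventually_mem {ι : Type*} {G : Subgroup (Perm (α × ℕ))}
    (hG : IsPointwiseClosed G) (u : Ultrafilter ι) {g : ι → Perm (α × ℕ)}
    (hgG : ∀ᶠ n in u, g n ∈ G) {π : Perm ℕ} (hπ : ∀ x, ∀ᶠ n in u, (g n x).2 = π x.2) :
    ∃ h ∈ G, IsLift h π ∧ ∀ x, ∀ᶠ n in u, g n x = h x := by
  obtain ⟨h₁, hh₁⟩ := u.exists_forall_eventually_eq_of_finite fun n x => (g n x).1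
  let h₀ : α × ℕ → α × ℕ := fun x => (h₁ x, π x.2)
  have hlim : ∀ x, ∀ᶠ n in u, g n x = h₀ x := fun x =>
    ((hh₁ x).and (hπ x)).mono fun n hn => Prod.ext hn.1 hn.2
  have hinj : Function.Injective h₀ := fun x y hxy => by
    obtain ⟨n, hx, hy⟩ := ((hlim x).and (hlim y)).exists
    exact (g n).injective (by rw [hx, hy, hxy])
  let h : Perm (α × ℕ) :=
    .ofBijective h₀ ⟨hinj, surjective_of_injective_of_snd_eq hinj fun _ => rfl⟩
  refine ⟨h, hG h fun s => ?_, fun _ _ => rfl, hlim⟩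
  obtain ⟨n, hn, hs⟩ := (hgG.and (s.eventually_all.2 fun x _ => hlim x)).exists
  exact ⟨g n, hn, hs⟩

theorem exists_finset_forall_isLift_fixesBlocks {G : Subgroup (Perm (α × ℕ))}
    (hsurj : ∀ τ, ∃ g ∈ G, IsLift g τ) (hG : IsPointwiseClosed G) (J : Finset ℕ) :
    ∃ M : Finset ℕ, ∀ ρ : Perm ℕ, (∀ m ∈ M, ρ m = m) →
      ∃ g ∈ G, IsLift g ρ ∧ FixesBlocks g J := by
  let A (φ : α → J → α × ℕ) : Set (Perm ℕ) :=
    {π | ∃ g ∈ G, IsLift g π ∧ ∀ a (j : J), g (a, j) = φ a j}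
  have hcover : ⋃ φ, A φ = Set.univ := Set.eq_univ_of_forall fun π => by
    obtain ⟨g, hg, hgπ⟩ := hsurj π
    exact Set.mem_iUnion.2 ⟨fun a j => g (a, j), g, hg, hgπ, fun _ _ => rfl⟩
  have hclosed (φ) : IsClosed (A φ) := by
    refine isClosed_iff_ultrafilter.2 fun π u hu hA => ?_
    choose! g hgG hgσ hgφ using fun σ (hσ : σ ∈ A φ) => hσ
    have hπ (x : α × ℕ) : ∀ᶠ σ in u, (g σ x).2 = π x.2 := by
      filter_upwards [hA, eventually_apply_eq_of_le_nhds hu x.2] with σ hσ hσx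
      rw [(hgσ σ hσ).snd, hσx]
    obtain ⟨h, hhG, hhπ, hlim⟩ :=
      exists_isLift_mem_of_eventually_mem hG u (Eventually.mono hA hgG) hπ
    refine ⟨h, hhG, hhπ, fun a j => ?_⟩
    obtain ⟨σ, hσ, hσA⟩ := ((hlim (a, j)).and hA).exists
    rw [← hσ, hgφ σ hσA a j]
  obtain ⟨φ, π₀, hπ₀⟩ := nonempty_interior_of_iUnion_of_closed hclosed hcover
  obtain ⟨F, hF⟩ := exists_finset_forall_mem_of_mem_interior hπ₀
  -- if `ρ` fixes `F` and `π₀⁻¹ F`, then `π₀` and `π₀ * ρ` both lie in `A φ`, and their lifts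
  -- act on `α × J` in the same way
  refine ⟨F ∪ F.image ⇑π₀⁻¹, fun ρ hρ => ?_⟩
  obtain ⟨g₀, hg₀, hg₀π, hg₀φ⟩ := interior_subset hπ₀
  obtain ⟨g₁, hg₁, hg₁π, hg₁φ⟩ := hF (π₀ * ρ) fun i hi => by
    have hρi : ρ⁻¹ (π₀⁻¹ i) = π₀⁻¹ i := Perm.inv_eq_iff_eq.2 (hρ _ (by simp [hi])).symm
    exact ⟨by simp [hρ i (by simp [hi])], by rw [mul_inv_rev, Perm.mul_apply, hρi]⟩
  refine ⟨g₀⁻¹ * g₁, mul_mem (inv_mem hg₀) hg₁, by simpa using hg₀π.inv.mul hg₁π,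
    fun j hj a => ?_⟩
  rw [Perm.mul_apply, hg₁φ a ⟨j, hj⟩, ← hg₀φ a ⟨j, hj⟩]
  simp

theorem exists_fixesBlocks_snd_eq {G : Subgroup (Perm (α × ℕ))}
    (hsurj : ∀ τ, ∃ g ∈ G, IsLift g τ) (hG : IsPointwiseClosed G) (J : Finset ℕ) {p q : ℕ}
    (hp : p ∉ J) (hq : q ∉ J) (hpq : p ≠ q) :
    ∃ g ∈ G, FixesBlocks g J ∧ ∀ a, (g (a, p)).2 = q := by
  obtain ⟨M, hM⟩ := exists_finset_forall_isLift_fixesBlocks hsurj hG J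
  obtain ⟨N, hN⟩ := Finset.exists_nat_subset_range (M ∪ J ∪ {p, q})
  have hlt : ∀ m ∈ M ∪ J ∪ {p, q}, m < N := fun m hm => Finset.mem_range.1 (hN hm)
  have hpN := hlt p (by simp)
  have hqN := hlt q (by simp)
  -- conjugate a lift of the far transposition `swap N (N + 1)` fixing the blocks of `J`
  -- by a lift of a permutation fixing `J` and sending `N, N + 1` to `p, q`
  obtain ⟨w, hw, hwπ, hwJ⟩ := hM (swap N (N + 1)) fun m hm => by
    have := hlt m (by simp [hm])
    exact swap_apply_of_ne_of_ne (by omega) (by omega)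
  let τ := swap N p * swap (N + 1) q
  have hτN : τ N = p := by
    simp [τ, swap_apply_of_ne_of_ne (by omega : N ≠ N + 1) (by omega : N ≠ q)]
  have hτN' : τ (N + 1) = q := by
    simp [τ, swap_apply_of_ne_of_ne (by omega : q ≠ N) hpq.symm]
  have hτJ : ∀ j ∈ (J : Set ℕ), τ j = j := fun j hj => by
    have := hlt j (by simp [Finset.mem_coe.1 hj])
    have hjp : j ≠ p := fun h => hp (h ▸ hj)
    have hjq : j ≠ q := fun h => hq (h ▸ hj)
    simp [τ, swap_apply_of_ne_of_ne (by omega : j ≠ N + 1) hjq,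
      swap_apply_of_ne_of_ne (by omega : j ≠ N) hjp]
  obtain ⟨t, ht, htτ⟩ := hsurj τ
  have hswap : IsLift (t * w * t⁻¹) (swap p q) := by
    rw [← hτN, ← hτN', swap_apply_apply]
    exact (htτ.mul hwπ).mul htτ.inv
  exact ⟨t * w * t⁻¹, mul_mem (mul_mem ht hw) (inv_mem ht), hwJ.conj htτ hτJ,
    fun a => by rw [hswap a p, swap_apply_left]⟩

theorem exists_isCoherent {G : Subgroup (Perm (α × ℕ))}
    (hsurj : ∀ τ, ∃ g ∈ G, IsLift g τ) (hG : IsPointwiseClosed G) :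
    ∃ e : ℕ → α ≃ α, IsCoherent G e := by
  have htransport (n p : ℕ) : ∃ f : α ≃ α, p < n →
      ∃ g ∈ G, FixesBlocks g (Set.Iio n \ {p}) ∧ ∀ a, g (a, n) = (f a, p) := by
    by_cases hp : p < n
    · obtain ⟨g, hg, hgJ, hgn⟩ :=
        exists_fixesBlocks_snd_eq hsurj hG ((Finset.range n).erase p) (by simp) (by simp) hp.ne'
      obtain ⟨f, hf⟩ := exists_equiv_of_forall_snd_eq hgn
      rw [Finset.coe_erase, Finset.coe_range] at hgJ
      exact ⟨f, fun _ => ⟨g, hg, hgJ, hf⟩⟩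
    · exact ⟨1, fun h => absurd h hp⟩
  choose f hf using htransport
  obtain ⟨e, he⟩ := (hyperfilter ℕ).exists_forall_eventually_eq_of_finite f
  refine ⟨e, fun p q N => ?_⟩
  have hlarge : ∀ᶠ n in hyperfilter ℕ, N ≤ n ∧ p < n ∧ q < n := by
    refine Eventually.filter_mono (hyperfilter_le_cofinite.trans Nat.cofinite_eq_atTop.le) ?_
    filter_upwards [eventually_ge_atTop N, eventually_gt_atTop p, eventually_gt_atTop q]
      with n h₁ h₂ h₃ using ⟨h₁, h₂, h₃⟩
  obtain ⟨n, hnp, hnq, hNn, hpn, hqn⟩ := ((he p).and ((he q).and hlarge)).exists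
  obtain ⟨gp, hgp, hgpJ, hgpn⟩ := hf n p hpn
  obtain ⟨gq, hgq, hgqJ, hgqn⟩ := hf n q hqn
  rw [hnp] at hgpn
  rw [hnq] at hgqn
  have hgp_inv (a : α) : gp⁻¹ (a, p) = ((e p).symm a, n) := by
    rw [Perm.inv_eq_iff_eq, hgpn, Equiv.apply_symm_apply]
  refine ⟨gq * gp⁻¹, mul_mem hgq (inv_mem hgp), ?_,
    fun a => by rw [Perm.mul_apply, hgp_inv, hgqn]⟩
  have hsub {r} (hr : r = p ∨ r = q) : Set.Iio N \ {p, q} ⊆ Set.Iio n \ {r} := fun j hj => by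
    simp only [Set.mem_sdiff, Set.mem_Iio, Set.mem_insert_iff, Set.mem_singleton_iff] at hj ⊢
    omega
  exact (hgqJ.mono (hsub (.inr rfl))).mul (hgpJ.inv.mono (hsub (.inl rfl)))

end Finite

def ladder (e : ℕ → α ≃ α) : Perm ℕ →* Perm (α × ℕ) where
  toFun π :=
    { toFun x := (e (π x.2) ((e x.2).symm x.1), π x.2)
      invFun x := (e (π⁻¹ x.2) ((e x.2).symm x.1), π⁻¹ x.2)
      left_inv x := by simp
      right_inv x := by simp }
  map_one' := by ext <;> simp
  map_mul' _ _ := by ext <;> simp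

theorem ladder_apply (e : ℕ → α ≃ α) (π : Perm ℕ) (a : α) (i : ℕ) :
    ladder e π (a, i) = (e (π i) ((e i).symm a), π i) := rfl

theorem ladder_swap_mem {G : Subgroup (Perm (α × ℕ))} (hG : IsPointwiseClosed G)
    {e : ℕ → α ≃ α} (he : IsCoherent G e) (p q : ℕ) : ladder e (swap p q) ∈ G := by
  refine hG _ fun s => ?_
  obtain ⟨N, hN⟩ := Finset.exists_nat_subset_range (s.image Prod.snd ∪ {p, q})
  have hlt : ∀ m ∈ s.image Prod.snd ∪ {p, q}, m < N := fun m hm => Finset.mem_range.1 (hN hm)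
  have hpN := hlt p (by simp)
  have hqN := hlt q (by simp)
  -- with block `N` as spare room: `p → N`, then `q → p`, then `N → q`
  obtain ⟨g₁, hg₁, hg₁J, hg₁p⟩ := he p N (N + 1)
  obtain ⟨g₂, hg₂, hg₂J, hg₂q⟩ := he q p (N + 1)
  obtain ⟨g₃, hg₃, hg₃J, hg₃N⟩ := he N q (N + 1)
  have hfix {g : Perm (α × ℕ)} {j r r' : ℕ} (hg : FixesBlocks g (Set.Iio (N + 1) \ {r, r'}))
      (hj : j ≤ N) (hr : j ≠ r) (hr' : j ≠ r') (a : α) : g (a, j) = (a, j) :=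
    hg j (by simp [Nat.lt_succ_of_le hj, hr, hr']) a
  refine ⟨g₃ * g₂ * g₁, mul_mem (mul_mem hg₃ hg₂) hg₁, fun ⟨a, i⟩ hi => ?_⟩
  have hiN : i < N := hlt i (Finset.mem_union_left _ (Finset.mem_image_of_mem Prod.snd hi))
  simp only [Perm.mul_apply, ladder_apply]
  by_cases hip : i = p
  · subst hip
    rw [hg₁p, hfix hg₂J le_rfl (by omega) (by omega), hg₃N, swap_apply_left]
    simp
  by_cases hiq : i = q
  · subst hiq
    rw [hfix hg₁J hiN.le hip (by omega), hg₂q, hfix hg₃J hpN.le (by omega) (Ne.symm hip),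
      swap_apply_right]
  · rw [hfix hg₁J hiN.le hip (by omega), hfix hg₂J hiN.le hiq hip,
      hfix hg₃J hiN.le (by omega) hiq, swap_apply_of_ne_of_ne hip hiq]
    simp

end BlockPerm

theorem closed_group_contains_ladder_general
    (α : Type*) [Finite α]
    (G : Subgroup (Equiv.Perm (α × ℕ)))
    (hsurj : ∀ τ : Equiv.Perm ℕ, ∃ g ∈ G, ∀ (a : α) (i : ℕ), (g (a, i)).2 = τ i)
    (hclosed : ∀ σ : Equiv.Perm (α × ℕ),
      (∀ s : Finset (α × ℕ), ∃ g ∈ G, ∀ x ∈ s, g x = σ x) → σ ∈ G) :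
    ∃ e : ℕ → (α ≃ α), ∀ π : Equiv.Perm ℕ,
      ∃ g ∈ G, ∀ (a : α) (i : ℕ), g (a, i) = (e (π i) ((e i).symm a), π i) := by
  obtain ⟨e, he⟩ := BlockPerm.exists_isCoherent hsurj hclosed
  refine ⟨e, fun π => ⟨BlockPerm.ladder e π, hclosed _ fun s => ?_, fun a i => rfl⟩⟩
  obtain ⟨σ, hσ, hσπ⟩ := π.exists_mem_forall_eq_of_forall_swap_mem
    (H := G.comap (BlockPerm.ladder e)) (BlockPerm.ladder_swap_mem hclosed he) (s.image Prod.snd)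
  refine ⟨BlockPerm.ladder e σ, hσ, fun x hx => ?_⟩
  rw [BlockPerm.ladder_apply, BlockPerm.ladder_apply, hσπ _ (Finset.mem_image_of_mem _ hx)]

/-- Let `α` be a finite nonempty type and `G ≤ Perm (α × ℕ)` a closed,
block-preserving group inducing the full symmetric group on the set of blocks
`α × {i}`. Then, after re-enumerating the elements within each block (via a
family of bijections `e i : α ≃ α`), `G` contains all the permutations
`(a, i) ↦ (a, π i)` for `π ∈ Sym(ℕ)`. -/
theorem closed_group_contains_ladder
    (α : Type*) [Finite α] [Nonempty α]
    (G : Subgroup (Equiv.Perm (α × ℕ)))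
    (hbp : ∀ g ∈ G, ∃ σ : Equiv.Perm ℕ, ∀ (a : α) (i : ℕ), (g (a, i)).2 = σ i)
    (hsurj : ∀ τ : Equiv.Perm ℕ, ∃ g ∈ G, ∀ (a : α) (i : ℕ), (g (a, i)).2 = τ i)
    (hclosed : ∀ σ : Equiv.Perm (α × ℕ),
      (∀ s : Finset (α × ℕ), ∃ g ∈ G, ∀ x ∈ s, g x = σ x) → σ ∈ G) :
    ∃ e : ℕ → (α ≃ α), ∀ π : Equiv.Perm ℕ,
      ∃ g ∈ G, ∀ (a : α) (i : ℕ), g (a, i) = (e (π i) ((e i).symm a), π i) :=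
  closed_group_contains_ladder_general α G hsurj hclosed
end

section
/- Let α be a finite nonempty type and let G and G' be two closed, block-preserving subgroups of Perm(α × ℕ) whose induced homomorphisms to Perm ℕ are surjective, and which both contain every permutation ℓ_π : (a, i) ↦ (a, π i) for π ∈ Perm ℕ. For X ∈ {G, G'}, let S^X = {g ∈ X | ḡ = id} and, for i ∈ ℕ, let H_i^X = {π ∈ Perm α | ∃ g ∈ S^X, (∀ j < i, ∀ a, g (a, j) = (a, j)) ∧ (∀ a, g (a, i) = (π a, i))}. If H_i^G = H_i^{G'} for every i ∈ ℕ, then G = G'. (Such a closed group is uniquely determined by its tower.) -/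
/-- The `i`-th tower subgroup of a block-preserving group `G ≤ Perm (α × ℕ)`:
the permutations of `α` induced on the block `α × {i}` by elements of the
blockwise stabilizer of `G` fixing the blocks `α × {j}`, `j < i`, pointwise. -/
def towerGroup {α : Type*} (G : Subgroup (Equiv.Perm (α × ℕ))) (i : ℕ) :
    Subgroup (Equiv.Perm α) where
  carrier := {π | ∃ g ∈ G, (∀ (a : α) (j : ℕ), (g (a, j)).2 = j) ∧
    (∀ j < i, ∀ a : α, g (a, j) = (a, j)) ∧ ∀ a : α, g (a, i) = (π a, i)}
  one_mem' := ⟨1, G.one_mem, fun _ _ => rfl, fun _ _ _ => rfl, fun _ => rfl⟩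
  mul_mem' := by
    rintro π π' ⟨g, hg, hsec, hfix, hact⟩ ⟨g', hg', hsec', hfix', hact'⟩
    refine ⟨g * g', G.mul_mem hg hg', fun a j => ?_, fun j hj a => ?_, fun a => ?_⟩
    · have h2 : g' (a, j) = ((g' (a, j)).1, j) := by
        exact Prod.ext rfl (hsec' a j)
      rw [Equiv.Perm.mul_apply, h2]
      exact hsec _ j
    · rw [Equiv.Perm.mul_apply, hfix' j hj a, hfix j hj a]
    · rw [Equiv.Perm.mul_apply, hact' a, hact (π' a)]
      rfl
  inv_mem' := by
    rintro π ⟨g, hg, hsec, hfix, hact⟩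
    have hsec' : ∀ x : α × ℕ, (g x).2 = x.2 := by
      rintro ⟨a, j⟩; exact hsec a j
    refine ⟨g⁻¹, G.inv_mem hg, fun a j => ?_, fun j hj a => ?_, fun a => ?_⟩
    · have := hsec' (g⁻¹ (a, j))
      rw [← Equiv.Perm.mul_apply, mul_inv_cancel, Equiv.Perm.one_apply] at this
      exact this.symm
    · have key : g (a, j) = (a, j) := hfix j hj a
      rw [← key, ← Equiv.Perm.mul_apply, inv_mul_cancel, Equiv.Perm.one_apply, key]
    · have key : g (π⁻¹ a, i) = (a, i) := by rw [hact]; simp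
      rw [← key, ← Equiv.Perm.mul_apply, inv_mul_cancel, Equiv.Perm.one_apply]

/-!
Modulo the ladders, every element of a block-preserving group is block-diagonal,
`(a, i) ↦ (t i a, i)`. In a closed group containing the ladders, conjugating such an element
by the ladder of the transposition `(i j)` and dividing leaves an element supported on the
blocks `i` and `j`; conjugating further by ladders moves block `j` outside any finite set, so by
closedness the single-block element acting by `(t j)⁻¹ * t i` on block `i` lies in the group.
Conversely, closedness reassembles a block-diagonal element from its single-block pieces. So a
block-diagonal `t` lies in the group iff `t 0` lies in the `0`-th tower group and each
`(t 0)⁻¹ * t m`, `m ≠ 0`, lies in the `m`-th one: membership is read off from the tower.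
-/

open Equiv

section Blocks

variable {α ι : Type*}

def blockDiag : (ι → Perm α) →* Perm (α × ι) where
  toFun t :=
    { toFun := fun x => (t x.2 x.1, x.2)
      invFun := fun x => ((t x.2)⁻¹ x.1, x.2)
      left_inv := fun x => by simp
      right_inv := fun x => by simp }
  map_one' := rfl
  map_mul' _ _ := rfl

@[simp]
theorem blockDiag_apply (t : ι → Perm α) (a : α) (i : ι) : blockDiag t (a, i) = (t i a, i) :=
  rfl

theorem exists_eq_blockDiag {g : Perm (α × ι)} (hg : ∀ a i, (g (a, i)).2 = i) :
    ∃ t, g = blockDiag t := by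
  have hg' (x : α × ι) : g x = ((g x).1, x.2) := Prod.ext rfl (hg x.1 x.2)
  have hginv (x : α × ι) : g⁻¹ x = ((g⁻¹ x).1, x.2) :=
    Prod.ext rfl (by simpa using congrArg Prod.snd (hg' (g⁻¹ x)).symm)
  refine ⟨fun i => ⟨fun a => (g (a, i)).1, fun a => (g⁻¹ (a, i)).1, fun a => ?_, fun a => ?_⟩,
    Equiv.ext hg'⟩
  · dsimp only; rw [← hg' (a, i)]; simp
  · dsimp only; rw [← hginv (a, i)]; simp

theorem prodCongr_mul_blockDiag_mul_inv (σ : Perm ι) (t : ι → Perm α) :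
    prodCongr (Equiv.refl α) σ * blockDiag t * (prodCongr (Equiv.refl α) σ)⁻¹ =
      blockDiag (t ∘ σ.symm) :=
  Equiv.ext fun ⟨a, i⟩ => by simp [Perm.mul_apply]

theorem exists_eq_prodCongr_mul_blockDiag {g : Perm (α × ι)} {σ : Perm ι}
    (hg : ∀ a i, (g (a, i)).2 = σ i) : ∃ t, g = prodCongr (Equiv.refl α) σ * blockDiag t := by
  obtain ⟨t, ht⟩ := exists_eq_blockDiag (g := (prodCongr (Equiv.refl α) σ)⁻¹ * g)
    fun a i => by simp [Perm.mul_apply, hg]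
  exact ⟨t, by rw [← ht, mul_inv_cancel_left]⟩

theorem mulSingle_comp_symm {M : Type*} [One M] [DecidableEq ι] (σ : Perm ι) (i : ι) (p : M) :
    Pi.mulSingle i p ∘ σ.symm = Pi.mulSingle (σ i) p := by
  simp [Pi.mulSingle_comp_equiv]

theorem blockDiag_comp_symm_mem {X : Subgroup (Perm (α × ι))}
    (hlad : ∀ π : Perm ι, prodCongr (Equiv.refl α) π ∈ X) (σ : Perm ι) {t : ι → Perm α}
    (ht : blockDiag t ∈ X) : blockDiag (t ∘ σ.symm) ∈ X := by
  rw [← prodCongr_mul_blockDiag_mul_inv]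
  exact X.mul_mem (X.mul_mem (hlad σ) ht) (X.inv_mem (hlad σ))

end Blocks

def IsPointwiseClosed {β : Type*} (X : Subgroup (Perm β)) : Prop :=
  ∀ σ : Perm β, (∀ s : Finset β, ∃ g ∈ X, ∀ x ∈ s, g x = σ x) → σ ∈ X

namespace IsPointwiseClosed

variable {α ι : Type*} [DecidableEq ι] {X : Subgroup (Perm (α × ι))}

theorem blockDiag_mem (hX : IsPointwiseClosed X) {t : ι → Perm α}
    (ht : ∀ S : Finset ι, ∃ u, blockDiag u ∈ X ∧ ∀ k ∈ S, u k = t k) : blockDiag t ∈ X := by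
  refine hX _ fun s => ?_
  obtain ⟨u, hu, hut⟩ := ht (s.image Prod.snd)
  exact ⟨_, hu, fun ⟨a, k⟩ hx => by simp [hut k (Finset.mem_image_of_mem Prod.snd hx)]⟩

theorem blockDiag_mem_of_mulSingle_mem (hX : IsPointwiseClosed X) {t : ι → Perm α}
    (ht : ∀ k, blockDiag (Pi.mulSingle k (t k)) ∈ X) : blockDiag t ∈ X := by
  refine hX.blockDiag_mem fun S => ⟨S.piecewise t 1, ?_, fun k hk => S.piecewise_eq_of_mem _ _ hk⟩
  induction S using Finset.induction_on with
  | empty => simp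
  | insert k S hk ih =>
    have hinsert : (insert k S).piecewise t 1 = Pi.mulSingle k (t k) * S.piecewise t 1 := by
      funext l
      rcases eq_or_ne l k with rfl | hl
      · simp [hk]
      · simp [hl, Finset.piecewise_insert_of_ne]
    rw [hinsert, map_mul]
    exact X.mul_mem (ht k) ih

section Ladders

variable [Infinite ι] (hlad : ∀ π : Perm ι, prodCongr (Equiv.refl α) π ∈ X)
include hlad

theorem blockDiag_mulSingle_mem_of_mul_mem (hX : IsPointwiseClosed X) {i j : ι} (hij : i ≠ j)
    {p q : Perm α} (h : blockDiag (Pi.mulSingle i p * Pi.mulSingle j q) ∈ X) :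
    blockDiag (Pi.mulSingle i p) ∈ X := by
  refine hX.blockDiag_mem fun S => ?_
  obtain ⟨m, hm⟩ := Infinite.exists_notMem_finset (insert i S)
  simp only [Finset.mem_insert, not_or] at hm
  refine ⟨_, blockDiag_comp_symm_mem hlad (swap j m) h, fun k hk => ?_⟩
  rw [Pi.mul_comp, mulSingle_comp_symm, mulSingle_comp_symm, swap_apply_left,
    swap_apply_of_ne_of_ne hij (Ne.symm hm.1), Pi.mul_apply,
    Pi.mulSingle_eq_of_ne (ne_of_mem_of_not_mem hk hm.2), mul_one]

theorem blockDiag_mulSingle_inv_mul_mem (hX : IsPointwiseClosed X) {t : ι → Perm α}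
    (ht : blockDiag t ∈ X) {i j : ι} (hij : i ≠ j) :
    blockDiag (Pi.mulSingle i ((t j)⁻¹ * t i)) ∈ X := by
  have hquot : (t ∘ (swap i j).symm)⁻¹ * t =
      Pi.mulSingle i ((t j)⁻¹ * t i) * Pi.mulSingle j ((t i)⁻¹ * t j) := by
    funext k
    rcases eq_or_ne k i with rfl | hki
    · simp [hij]
    rcases eq_or_ne k j with rfl | hkj
    · simp [hki]
    · simp [hki, hkj, swap_apply_of_ne_of_ne]
  refine hX.blockDiag_mulSingle_mem_of_mul_mem hlad hij (q := (t i)⁻¹ * t j) ?_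
  rw [← hquot, map_mul, map_inv]
  exact X.mul_mem (X.inv_mem (blockDiag_comp_symm_mem hlad _ ht)) ht

end Ladders

end IsPointwiseClosed

section Tower

variable {α : Type*} {X : Subgroup (Perm (α × ℕ))}

theorem mem_towerGroup_iff {i : ℕ} {π : Perm α} :
    π ∈ towerGroup X i ↔ ∃ t, blockDiag t ∈ X ∧ (∀ k < i, t k = 1) ∧ t i = π := by
  constructor
  · rintro ⟨g, hg, hblock, hfix, hact⟩
    obtain ⟨t, rfl⟩ := exists_eq_blockDiag hblock
    refine ⟨t, hg, fun k hk => Equiv.ext fun a => ?_, Equiv.ext fun a => ?_⟩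
    · simpa using hfix k hk a
    · simpa using hact a
  · rintro ⟨t, ht, hfix, rfl⟩
    exact ⟨blockDiag t, ht, fun _ _ => rfl, fun k hk a => by simp [hfix k hk], fun _ => rfl⟩

variable (hlad : ∀ π : Perm ℕ, prodCongr (Equiv.refl α) π ∈ X)
include hlad

theorem IsPointwiseClosed.blockDiag_mulSingle_mem_iff (hX : IsPointwiseClosed X) {j : ℕ}
    (hj : j ≠ 0) {π : Perm α} : blockDiag (Pi.mulSingle j π) ∈ X ↔ π ∈ towerGroup X j := by
  rw [mem_towerGroup_iff]
  refine ⟨fun h => ⟨_, h, fun k hk => Pi.mulSingle_eq_of_ne hk.ne _, Pi.mulSingle_eq_same _ _⟩, ?_⟩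
  rintro ⟨t, ht, hfix, rfl⟩
  simpa [hfix 0 (Nat.pos_of_ne_zero hj)] using hX.blockDiag_mulSingle_inv_mul_mem hlad ht hj

theorem IsPointwiseClosed.blockDiag_mem_iff (hX : IsPointwiseClosed X) {t : ℕ → Perm α} :
    blockDiag t ∈ X ↔ t 0 ∈ towerGroup X 0 ∧ ∀ m ≠ 0, (t 0)⁻¹ * t m ∈ towerGroup X m := by
  refine ⟨fun ht => ⟨mem_towerGroup_iff.2 ⟨t, ht, fun _ h => absurd h (Nat.not_lt_zero _), rfl⟩,
    fun m hm => (hX.blockDiag_mulSingle_mem_iff hlad hm).1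
      (hX.blockDiag_mulSingle_inv_mul_mem hlad ht hm)⟩, ?_⟩
  rintro ⟨h0, htower⟩
  obtain ⟨v, hv, -, hv0⟩ := mem_towerGroup_iff.1 h0
  have hrest : blockDiag (v⁻¹ * t) ∈ X := hX.blockDiag_mem_of_mulSingle_mem fun m => by
    rcases eq_or_ne m 0 with rfl | hm
    · simp [hv0]
    have hsplit : (v⁻¹ * t) m = ((v 0)⁻¹ * v m)⁻¹ * ((t 0)⁻¹ * t m) := by simp [hv0, mul_assoc]
    rw [hsplit, Pi.mulSingle_mul, Pi.mulSingle_inv, map_mul, map_inv]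
    exact X.mul_mem (X.inv_mem (hX.blockDiag_mulSingle_inv_mul_mem hlad hv hm))
      ((hX.blockDiag_mulSingle_mem_iff hlad hm).2 (htower m hm))
  simpa using X.mul_mem hv hrest

end Tower

theorem le_of_towerGroup_le {α : Type*} {X Y : Subgroup (Perm (α × ℕ))}
    (hbp : ∀ g ∈ X, ∃ σ : Perm ℕ, ∀ a i, (g (a, i)).2 = σ i)
    (hX : IsPointwiseClosed X) (hXlad : ∀ π : Perm ℕ, prodCongr (Equiv.refl α) π ∈ X)
    (hY : IsPointwiseClosed Y) (hYlad : ∀ π : Perm ℕ, prodCongr (Equiv.refl α) π ∈ Y)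
    (htower : ∀ i, towerGroup X i ≤ towerGroup Y i) : X ≤ Y := by
  intro g hg
  obtain ⟨σ, hσ⟩ := hbp g hg
  obtain ⟨t, rfl⟩ := exists_eq_prodCongr_mul_blockDiag hσ
  have ht : blockDiag t ∈ X := by simpa using X.mul_mem (X.inv_mem (hXlad σ)) hg
  rw [hX.blockDiag_mem_iff hXlad] at ht
  exact Y.mul_mem (hYlad σ)
    ((hY.blockDiag_mem_iff hYlad).2 ⟨htower 0 ht.1, fun m hm => htower m (ht.2 m hm)⟩)

theorem closed_group_determined_by_tower_general
    (α : Type*)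
    (G G' : Subgroup (Equiv.Perm (α × ℕ)))
    (hbp : ∀ g ∈ G, ∃ σ : Equiv.Perm ℕ, ∀ (a : α) (i : ℕ), (g (a, i)).2 = σ i)
    (hbp' : ∀ g ∈ G', ∃ σ : Equiv.Perm ℕ, ∀ (a : α) (i : ℕ), (g (a, i)).2 = σ i)
    (hclosed : ∀ σ : Equiv.Perm (α × ℕ),
      (∀ s : Finset (α × ℕ), ∃ g ∈ G, ∀ x ∈ s, g x = σ x) → σ ∈ G)
    (hclosed' : ∀ σ : Equiv.Perm (α × ℕ),
      (∀ s : Finset (α × ℕ), ∃ g ∈ G', ∀ x ∈ s, g x = σ x) → σ ∈ G')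
    (hlad : ∀ π : Equiv.Perm ℕ, Equiv.prodCongr (Equiv.refl α) π ∈ G)
    (hlad' : ∀ π : Equiv.Perm ℕ, Equiv.prodCongr (Equiv.refl α) π ∈ G')
    (htower : ∀ i : ℕ, towerGroup G i = towerGroup G' i) :
    G = G' :=
  le_antisymm (le_of_towerGroup_le hbp hclosed hlad hclosed' hlad' fun i => (htower i).le)
    (le_of_towerGroup_le hbp' hclosed' hlad' hclosed hlad fun i => (htower i).ge)

/-- A closed block-preserving subgroup of `Perm (α × ℕ)` inducing the full
symmetric group on the blocks and containing all the "ladder" permutations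
`(a, i) ↦ (a, π i)` is uniquely determined by its tower. -/
theorem closed_group_determined_by_tower
    (α : Type*) [Finite α] [Nonempty α]
    (G G' : Subgroup (Equiv.Perm (α × ℕ)))
    (hbp : ∀ g ∈ G, ∃ σ : Equiv.Perm ℕ, ∀ (a : α) (i : ℕ), (g (a, i)).2 = σ i)
    (hbp' : ∀ g ∈ G', ∃ σ : Equiv.Perm ℕ, ∀ (a : α) (i : ℕ), (g (a, i)).2 = σ i)
    (hsurj : ∀ τ : Equiv.Perm ℕ, ∃ g ∈ G, ∀ (a : α) (i : ℕ), (g (a, i)).2 = τ i)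
    (hsurj' : ∀ τ : Equiv.Perm ℕ, ∃ g ∈ G', ∀ (a : α) (i : ℕ), (g (a, i)).2 = τ i)
    (hclosed : ∀ σ : Equiv.Perm (α × ℕ),
      (∀ s : Finset (α × ℕ), ∃ g ∈ G, ∀ x ∈ s, g x = σ x) → σ ∈ G)
    (hclosed' : ∀ σ : Equiv.Perm (α × ℕ),
      (∀ s : Finset (α × ℕ), ∃ g ∈ G', ∀ x ∈ s, g x = σ x) → σ ∈ G')
    (hlad : ∀ π : Equiv.Perm ℕ, Equiv.prodCongr (Equiv.refl α) π ∈ G)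
    (hlad' : ∀ π : Equiv.Perm ℕ, Equiv.prodCongr (Equiv.refl α) π ∈ G')
    (htower : ∀ i : ℕ, towerGroup G i = towerGroup G' i) :
    G = G' :=
  closed_group_determined_by_tower_general α G G' hbp hbp' hclosed hclosed' hlad hlad' htower
end

section
/- Let k be a natural number and let G = {g ∈ Perm(ℕ × Fin k) | ∃ σ ∈ Perm (Fin k), ∃ f : Fin k → Perm ℕ, ∀ a i, g (a, i) = (f i a, σ i)} be the wreath product Sym(ℕ) ≀ Sym(k) acting on k infinite blocks ℕ × {i}. Then for every natural number n, the number of G-orbits of n-element finite subsets of ℕ × Fin k equals the number of integer partitions of n with at most k parts. -/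
namespace Set

variable {α I : Type*}

def fiber (s : Set (α × I)) (i : I) : Set α := {a | (a, i) ∈ s}

theorem ext_fiber {s t : Set (α × I)} (h : ∀ i, s.fiber i = t.fiber i) : s = t := by
  ext ⟨a, i⟩
  exact Set.ext_iff.1 (h i) a

theorem Finite.fiber {s : Set (α × I)} (hs : s.Finite) (i : I) : (s.fiber i).Finite :=
  hs.preimage (Prod.mk_left_injective i).injOn

theorem finite_of_forall_fiber_finite [Finite I] {s : Set (α × I)}
    (h : ∀ i, (s.fiber i).Finite) : s.Finite :=
  ((Set.finite_iUnion h).prod Set.finite_univ).subset fun x hx =>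
    ⟨Set.mem_iUnion.2 ⟨x.2, hx⟩, Set.mem_univ _⟩

theorem ncard_eq_sum_ncard_fiber [Fintype I] {s : Set (α × I)} (hs : s.Finite) :
    s.ncard = ∑ i, (s.fiber i).ncard := by
  have : ∀ i, Finite (s.fiber i) := fun i => (hs.fiber i).to_subtype
  let e : s ≃ Σ i, s.fiber i :=
    { toFun x := ⟨x.1.2, x.1.1, x.2⟩
      invFun x := ⟨(x.2.1, x.1), x.2.2⟩ }
  rw [← Nat.card_coe_set_eq, Nat.card_congr e, Nat.card_sigma]
  simp only [Nat.card_coe_set_eq]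

theorem fiber_image_of_apply_eq {g : α × I → α × I} {σ : Equiv.Perm I} {h : I → α → α}
    (hg : ∀ a i, g (a, i) = (h i a, σ i)) (s : Set (α × I)) (i : I) :
    (g '' s).fiber (σ i) = h i '' s.fiber i := by
  ext b
  constructor
  · rintro ⟨⟨a, j⟩, hx, hgx⟩
    rw [hg, Prod.mk.injEq, σ.injective.eq_iff] at hgx
    obtain ⟨rfl, rfl⟩ := hgx
    exact ⟨a, hx, rfl⟩
  · rintro ⟨a, ha, rfl⟩
    exact ⟨(a, i), ha, hg a i⟩

end Set

theorem Equiv.Perm.exists_image_eq_of_ncard_eq {α : Type*} {A B : Set α} (hA : A.Finite)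
    (hB : B.Finite) (h : A.ncard = B.ncard) : ∃ π : Equiv.Perm α, π '' A = B := by
  classical
  have := Set.powersetCard.isPretransitive (α := α) (n := A.ncard)
  obtain ⟨π, hπ⟩ := MulAction.exists_smul_eq (Equiv.Perm α)
    (⟨hA.toFinset, by simp [Set.ncard_eq_toFinset_card A hA]⟩ : Set.powersetCard α A.ncard)
    ⟨hB.toFinset, by simp [h, Set.ncard_eq_toFinset_card B hB]⟩
  refine ⟨π, ?_⟩
  have := congrArg (fun s : Set.powersetCard α A.ncard => ((s : Finset α) : Set α)) hπ
  simpa [← Set.image_smul, Equiv.Perm.smul_def] using this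

theorem Fintype.exists_perm_comp_eq_of_map_univ_eq {α β : Type*} [Fintype α] [DecidableEq β]
    {f g : α → β} (h : Finset.univ.val.map f = Finset.univ.val.map g) :
    ∃ σ : Equiv.Perm α, ∀ a, g (σ a) = f a := by
  classical
  have hcard (b : β) : Fintype.card {a // f a = b} = Fintype.card {a // g a = b} := by
    have := congrArg (Multiset.count b) h
    simp only [Multiset.count_map, eq_comm (a := b)] at this
    simpa [Fintype.card_subtype, Finset.card_def] using this
  exact ⟨Equiv.ofFiberEquiv fun b => Fintype.equivOfCardEq (hcard b),
    Equiv.ofFiberEquiv_map _⟩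

theorem Fintype.exists_map_univ_eq {α β : Type*} [Fintype α] (m : Multiset β)
    (hm : Multiset.card m = Fintype.card α) :
    ∃ f : α → β, Finset.univ.val.map f = m := by
  classical
  let e : α ≃ m := Fintype.equivOfCardEq (by rw [Multiset.card_coe, hm])
  refine ⟨fun a => e a, ?_⟩
  calc Finset.univ.val.map (fun a => (e a : β))
      = (Finset.univ.val.map e).map (fun x : m => (x : β)) := (Multiset.map_map _ _ _).symm
    _ = m := by rw [Multiset.map_univ_val_equiv, Multiset.map_univ_coe]

theorem Multiset.eq_of_filter_ne_eq_of_card_eq {α : Type*} [DecidableEq α]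
    {m m' : Multiset α} (a : α) (hf : m.filter (· ≠ a) = m'.filter (· ≠ a))
    (hc : card m = card m') : m = m' := by
  have split (m : Multiset α) : m.filter (· ≠ a) + replicate (count a m) a = m := by
    simpa [← filter_eq'] using filter_add_not (· ≠ a) m
  have hcount : count a m = count a m' := by
    have hm := congrArg card (split m)
    have hm' := congrArg card (split m')
    rw [card_add, card_replicate] at hm hm'
    rw [hf] at hm
    omega
  rw [← split m, ← split m', hf, hcount]

namespace Set

variable {α I : Type*} [Fintype I]

noncomputable def fiberSizes (s : Set (α × I)) : Multiset ℕ :=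
  Finset.univ.val.map fun i => (s.fiber i).ncard

theorem card_fiberSizes (s : Set (α × I)) : Multiset.card s.fiberSizes = Fintype.card I := by
  simp [fiberSizes]

theorem Finite.sum_fiberSizes {s : Set (α × I)} (hs : s.Finite) :
    s.fiberSizes.sum = s.ncard := by
  rw [ncard_eq_sum_ncard_fiber hs, fiberSizes, Finset.sum]

theorem fiberSizes_image_of_mem_wreath {H : Subgroup (Equiv.Perm α)}
    {P : Subgroup (Equiv.Perm I)} {g : Equiv.Perm (α × I)} (hg : g ∈ wreath H P)
    (s : Set (α × I)) : (g '' s).fiberSizes = s.fiberSizes := by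
  obtain ⟨σ, -, h, -, hgh⟩ := hg
  rw [fiberSizes, ← Multiset.map_univ_val_equiv σ, Multiset.map_map]
  refine Multiset.map_congr rfl fun i _ => ?_
  rw [Function.comp_apply, fiber_image_of_apply_eq hgh,
    ncard_image_of_injective _ (h i).injective]

theorem exists_mem_wreath_image_eq_of_fiberSizes_eq {s t : Set (α × I)} (hs : s.Finite)
    (ht : t.Finite) (h : s.fiberSizes = t.fiberSizes) :
    ∃ g ∈ wreath (⊤ : Subgroup (Equiv.Perm α)) (⊤ : Subgroup (Equiv.Perm I)),
      g '' s = t := by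
  obtain ⟨σ, hσ⟩ := Fintype.exists_perm_comp_eq_of_map_univ_eq h
  choose π hπ using fun i =>
    Equiv.Perm.exists_image_eq_of_ncard_eq (hs.fiber i) (ht.fiber (σ i)) (hσ i).symm
  let g : Equiv.Perm (α × I) :=
    (Equiv.prodComm α I).trans ((Equiv.prodShear σ π).trans (Equiv.prodComm I α))
  have hg (a : α) (i : I) : g (a, i) = (π i a, σ i) := rfl
  refine ⟨g, ⟨σ, trivial, π, fun _ => trivial, hg⟩, ext_fiber fun j => ?_⟩
  obtain ⟨i, rfl⟩ := σ.surjective j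
  rw [fiber_image_of_apply_eq hg, hπ]

theorem exists_finite_fiberSizes_eq [Infinite α] (m : Multiset ℕ)
    (hm : Multiset.card m = Fintype.card I) :
    ∃ s : Set (α × I), s.Finite ∧ s.fiberSizes = m := by
  obtain ⟨f, rfl⟩ := Fintype.exists_map_univ_eq m hm
  choose S hS using fun i => _root_.Infinite.exists_subset_card_eq α (f i)
  have hfiber (i : I) : fiber {x | x.1 ∈ S x.2} i = S i := rfl
  refine ⟨{x | x.1 ∈ S x.2}, finite_of_forall_fiber_finite fun i => ?_, ?_⟩
  · rw [hfiber]
    exact (S i).finite_toSet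
  · simp only [fiberSizes, hfiber, ncard_coe_finset, hS]

end Set

section Profile

variable {α I : Type*} [Fintype I] {n : ℕ}

noncomputable def fiberPartition (s : {s : Set (α × I) // s.Finite ∧ s.ncard = n}) :
    {p : n.Partition // p.parts.card ≤ Fintype.card I} :=
  ⟨.ofSums n s.1.fiberSizes (s.2.1.sum_fiberSizes.trans s.2.2),
    (Multiset.card_le_card (Multiset.filter_le _ _)).trans (s.1.card_fiberSizes).le⟩

theorem fiberPartition_eq_iff {s t : {s : Set (α × I) // s.Finite ∧ s.ncard = n}} :
    fiberPartition s = fiberPartition t ↔ s.1.fiberSizes = t.1.fiberSizes := by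
  refine ⟨fun h => ?_, fun h => Subtype.ext (Nat.Partition.ext (by simp [fiberPartition, h]))⟩
  refine Multiset.eq_of_filter_ne_eq_of_card_eq 0 ?_ (by simp only [Set.card_fiberSizes])
  simpa [fiberPartition] using congrArg (fun p => p.1.parts) h

theorem permSetoid_wreath_top_eq_ker :
    permSetoid (wreath (⊤ : Subgroup (Equiv.Perm α)) (⊤ : Subgroup (Equiv.Perm I))) n =
      Setoid.ker (fiberPartition (α := α) (I := I)) := by
  ext s t
  rw [Setoid.ker_def, fiberPartition_eq_iff]
  constructor
  · rintro ⟨g, hg, hst⟩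
    rw [← hst, Set.fiberSizes_image_of_mem_wreath hg]
  · exact Set.exists_mem_wreath_image_eq_of_fiberSizes_eq s.2.1 t.2.1

theorem fiberPartition_surjective [Infinite α] :
    Function.Surjective (fiberPartition (α := α) (I := I) (n := n)) := by
  rintro ⟨p, hp⟩
  obtain ⟨s, hs, hsizes⟩ := Set.exists_finite_fiberSizes_eq (α := α) (I := I)
    (p.parts + Multiset.replicate (Fintype.card I - p.parts.card) 0) (by rw [Multiset.card_add, Multiset.card_replicate]; omega)
  have hsum : s.ncard = n := by
    rw [← hs.sum_fiberSizes, hsizes, Multiset.sum_add, p.parts_sum]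
    simp
  refine ⟨⟨s, hs, hsum⟩, Subtype.ext (Nat.Partition.ext ?_)⟩
  rw [fiberPartition, Nat.Partition.ofSums_parts, hsizes, Multiset.filter_add,
    Multiset.filter_eq_self.2 fun a ha => (p.parts_pos ha).ne',
    Multiset.filter_eq_nil.2 fun a ha => not_not.2 (Multiset.eq_of_mem_replicate ha), add_zero]

theorem profile_wreath_top_top [Infinite α] (n : ℕ) :
    profile (wreath (⊤ : Subgroup (Equiv.Perm α)) (⊤ : Subgroup (Equiv.Perm I))) n =
      Nat.card {p : n.Partition // p.parts.card ≤ Fintype.card I} := by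
  rw [profile, permSetoid_wreath_top_eq_ker]
  exact Nat.card_congr (Setoid.quotientKerEquivOfSurjective _ fiberPartition_surjective)

end Profile

/-- For the wreath product `G = Sym(ℕ) ≀ Sym(k)` acting on `k` infinite blocks
`ℕ × {i}`, the number of `G`-orbits of `n`-element subsets of `ℕ × Fin k`
equals the number of integer partitions of `n` with at most `k` parts. -/
theorem profile_symInfty_wreath_symk (k : ℕ) :
    ∀ n : ℕ,
      profile (wreath (⊤ : Subgroup (Equiv.Perm ℕ))
          (⊤ : Subgroup (Equiv.Perm (Fin k)))) n =
        Nat.card {p : Nat.Partition n // p.parts.card ≤ k} := by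
  intro n
  simpa using profile_wreath_top_top (α := ℕ) (I := Fin k) n
end

section
/- Let n be a natural number, let α : Fin n → Type be a family of finite nonempty types, and for each j let H_j be a subgroup of Perm (α j). On E = Σ j, (α j × ℕ), let K = {g ∈ Perm E | ∀ j, ∃ σ ∈ Perm ℕ, ∃ h : ℕ → H_j, ∀ a i, g ⟨j, (a, i)⟩ = ⟨j, (h i a, σ i)⟩} be the direct product of the wreath products H_j ≀ Sym(ℕ), each factor acting on its own summand α j × ℕ. Then K admits no proper normal subgroup of finite index: every normal subgroup of K of finite index equals K. -/
/-- The direct product `∏_j (H_j ≀ Sym(ℕ))` of wreath products, each factor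
acting on its own summand `α j × ℕ` of `E = Σ j, α j × ℕ`. -/
def prodWreath {n : ℕ} {α : Fin n → Type*}
    (H : ∀ j, Subgroup (Equiv.Perm (α j))) :
    Subgroup (Equiv.Perm (Σ j, α j × ℕ)) where
  carrier := {g | ∀ j, ∃ σ : Equiv.Perm ℕ, ∃ h : ℕ → Equiv.Perm (α j),
    (∀ i, h i ∈ H j) ∧ ∀ (a : α j) (i : ℕ), g ⟨j, (a, i)⟩ = ⟨j, (h i a, σ i)⟩}
  one_mem' := fun j => ⟨1, 1, fun _ => (H j).one_mem, fun _ _ => rfl⟩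
  mul_mem' := by
    intro g g' hg hg' j
    obtain ⟨σ, h, hmem, hgj⟩ := hg j
    obtain ⟨σ', h', hmem', hgj'⟩ := hg' j
    refine ⟨σ * σ', fun i => h (σ' i) * h' i,
      fun i => (H j).mul_mem (hmem _) (hmem' _), fun a i => ?_⟩
    simp [Equiv.Perm.mul_apply, hgj', hgj]
  inv_mem' := by
    intro g hg j
    obtain ⟨σ, h, hmem, hgj⟩ := hg j
    refine ⟨σ⁻¹, fun i => (h (σ⁻¹ i))⁻¹,
      fun i => (H j).inv_mem (hmem _), fun a i => ?_⟩
    have key : g ⟨j, ((h (σ⁻¹ i))⁻¹ a, σ⁻¹ i)⟩ = ⟨j, (a, i)⟩ := by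
      rw [hgj]; simp
    rw [← key, ← Equiv.Perm.mul_apply, inv_mul_cancel, Equiv.Perm.one_apply]

/-!
Everything rests on a swindle along `ℤ`: if `D` carries a copy of `m` on each of the slices
`0, d, 2d, …`, then `m` placed on slice `0` equals `D` times the inverse of `D` shifted by `d`,
i.e. a commutator of `D` with a shift. In `Sym(ℕ)`, with `d` the index `e` of a finite-index
normal subgroup `Φ`, the shift is an `e`-th power and hence lies in `Φ`; so `Φ` contains every
permutation with infinitely many fixed points, and every permutation is a product of two such.
Hence the top group `∏ⱼ Sym(ℕ)` lies in `N`. A base element, split into its parts over the even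
and over the odd positions, is then a product of two commutators of base elements with top
elements, so it lies in `N` as well.
-/

open Equiv

theorem mulSingle_zero_eq_mulIndicator_mul_inv {M : Type*} [Group M] (m : M) {d : ℤ}
    (hd : 0 < d) (k : ℤ) :
    (Pi.mulSingle 0 m : ℤ → M) k = {k | 0 ≤ k ∧ d ∣ k}.mulIndicator (fun _ => m) k *
      ({k | 0 ≤ k ∧ d ∣ k}.mulIndicator (fun _ => m) (k - d))⁻¹ := by
  simp only [Pi.mulSingle_apply, Set.mulIndicator_apply, Set.mem_ofPred_eq, sub_nonneg,
    dvd_sub_self_right]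
  rcases lt_trichotomy k 0 with hk | rfl | hk
  · simp [hk.ne, hk.not_ge, show ¬ d ≤ k by omega]
  · simp [hd.not_ge]
  · by_cases hdk : d ∣ k
    · simp [hk.ne', hk.le, hdk, Int.le_of_dvd hk hdk]
    · simp [hk.ne', hdk]

theorem Set.Infinite.exists_subset_infinite_diff {α : Type*} {s : Set α} (hs : s.Infinite) :
    ∃ t ⊆ s, t.Infinite ∧ (s \ t).Infinite := by
  obtain ⟨t, u, rfl, hdisj, hcard⟩ := hs.exists_union_disjoint_cardinal_eq_of_infinite
  have hfin : t.Finite ↔ u.Finite := by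
    rw [← Set.finite_coe_iff, ← Set.finite_coe_iff, ← Cardinal.lt_aleph0_iff_finite,
      ← Cardinal.lt_aleph0_iff_finite, hcard]
  refine ⟨t, Set.subset_union_left, fun ht => hs (ht.union (hfin.1 ht)), ?_⟩
  rw [Set.union_sdiff_cancel_left hdisj.le_bot]
  exact fun hu => hs ((hfin.2 hu).union hu)

theorem exists_int_prod_equiv_s17 {Y : Type*} [Countable Y] {A : Set Y} (hA : A.Infinite)
    (hAc : Aᶜ.Infinite) : ∃ Λ : ℤ × A ≃ Y, (∀ a, Λ (0, a) = a) ∧ ∀ k ≠ 0, ∀ a, Λ (k, a) ∉ A := by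
  classical
  have := hA.to_subtype
  have := hAc.to_subtype
  have : Nonempty {k : ℤ // k ≠ 0} := ⟨⟨1, one_ne_zero⟩⟩
  obtain ⟨φ⟩ : Nonempty ({k : ℤ // k ≠ 0} × A ≃ ↥Aᶜ) :=
    Cardinal.eq.1 (by rw [Cardinal.mk_eq_aleph0, Cardinal.mk_eq_aleph0])
  let Λ : ℤ × A ≃ Y := (((sumCompl (· = (0 : ℤ))).symm.prodCongr (Equiv.refl A)).trans
    (sumProdDistrib _ _ _)).trans ((sumCongr (uniqueProd A _) φ).trans (Set.sumCompl A))
  refine ⟨Λ, fun a => ?_, fun k hk a => ?_⟩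
  · simp [Λ]
  · have hk' : (sumCompl (· = (0 : ℤ))).symm k = Sum.inr ⟨k, hk⟩ :=
      sumCompl_symm_apply_of_neg (p := (· = (0 : ℤ))) hk
    simp only [Λ, trans_apply, prodCongr_apply, Prod.map, hk']
    exact (φ (⟨k, hk⟩, a)).2

theorem exists_mulIndicator_eq_mul_inv_comp {Y G : Type*} [Countable Y] [Group G] {A : Set Y}
    (hA : A.Infinite) (hAc : Aᶜ.Infinite) (v : Y → G) :
    ∃ (u : Y → G) (π : Perm Y), A.mulIndicator v = fun y => u y * (u (π⁻¹ y))⁻¹ := by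
  obtain ⟨Λ, hΛ₀, hΛ⟩ := exists_int_prod_equiv_s17 hA hAc
  refine ⟨fun y => {k : ℤ | 0 ≤ k ∧ 1 ∣ k}.mulIndicator (fun _ => v (Λ.symm y).2) (Λ.symm y).1,
    Λ.permCongr (prodCongr (Equiv.addRight 1) (Equiv.refl A)), funext fun y => ?_⟩
  obtain ⟨⟨k, a⟩, rfl⟩ := Λ.surjective y
  have hπ : (Λ.permCongr (prodCongr (Equiv.addRight 1) (Equiv.refl A)))⁻¹ (Λ (k, a)) =
      Λ (k - 1, a) := by
    rw [Perm.inv_def, symm_apply_eq]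
    simp
  simp only [hπ, symm_apply_apply]
  rw [← mulSingle_zero_eq_mulIndicator_mul_inv (v a) one_pos k]
  by_cases hk : k = 0
  · subst hk
    simp [hΛ₀]
  · rw [Set.mulIndicator_of_notMem (hΛ k hk a), Pi.mulSingle_eq_of_ne hk]

namespace Equiv.Perm

def prodCongrRightHom (α β : Type*) : (α → Perm β) →* Perm (α × β) where
  toFun := prodCongrRight
  map_one' := rfl
  map_mul' _ _ := rfl

variable {α β : Type*}

theorem prodCongr_mul_prodCongrRight_mul_inv (π : Perm α) (f : α → Perm β) :
    prodCongr π (Equiv.refl β) * prodCongrRight f * (prodCongr π (Equiv.refl β))⁻¹ =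
      prodCongrRight fun a => f (π⁻¹ a) := by
  ext ⟨a, b⟩ <;> simp [Perm.mul_apply]

theorem prodCongr_addRight_one_pow (e : ℕ) :
    prodCongr (Equiv.addRight (1 : ℤ)) (Equiv.refl β) ^ e =
      prodCongr (Equiv.addRight (e : ℤ)) (Equiv.refl β) := by
  induction e with
  | zero => ext ⟨k, b⟩ <;> simp
  | succ e ih =>
    rw [pow_succ, ih]
    ext ⟨k, b⟩ <;> simp [Perm.mul_apply]; ring

theorem prodCongrRight_mulSingle [DecidableEq α] (a : α) (e : Perm β) :
    prodCongrRight (Pi.mulSingle a e) = prodExtendRight a e := by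
  ext ⟨a', b⟩ <;> by_cases h : a' = a <;> simp [h, prodExtendRight_apply_ne]

theorem prodExtendRight_zero_mem {X : Type*} (Ψ : FiniteIndexNormalSubgroup (Perm (ℤ × X)))
    (τ : Perm X) : prodExtendRight 0 τ ∈ Ψ := by
  set e := (Ψ : Subgroup (Perm (ℤ × X))).index
  set f := {k : ℤ | 0 ≤ k ∧ (e : ℤ) ∣ k}.mulIndicator fun _ => τ
  set D := prodCongrRightHom ℤ X f
  set s := prodCongr (Equiv.addRight (1 : ℤ)) (Equiv.refl X) ^ e
  have hs : s ∈ Ψ := Subgroup.pow_index_mem _ _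
  have hconj : s * D⁻¹ * s⁻¹ = prodCongrRightHom ℤ X fun k => (f (k - e))⁻¹ := by
    rw [← map_inv, show s = _ from prodCongr_addRight_one_pow e]
    exact prodCongr_mul_prodCongrRight_mul_inv _ _
  have hcomm : prodExtendRight 0 τ = D * s * D⁻¹ * s⁻¹ := by
    rw [mul_assoc D, mul_assoc D, hconj, ← map_mul, ← prodCongrRight_mulSingle]
    congr 1
    funext k
    exact mulSingle_zero_eq_mulIndicator_mul_inv τ
      (by exact_mod_cast Nat.pos_of_ne_zero Subgroup.FiniteIndex.index_ne_zero) k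
  rw [hcomm]
  exact Ψ.mul_mem (Subgroup.Normal.conj_mem inferInstance _ hs D) (Ψ.inv_mem hs)

theorem mem_of_infinite_fixedPoints {Y : Type*} [Countable Y]
    (Φ : FiniteIndexNormalSubgroup (Perm Y)) {σ : Perm Y} (hσ : {y | σ y = y}.Infinite) :
    σ ∈ Φ := by
  obtain ⟨B, hBfix, hB, hdiff⟩ := hσ.exists_subset_infinite_diff
  have hA : Bᶜ.Infinite := hdiff.mono fun y hy => hy.2
  obtain ⟨Λ, hΛ₀, hΛ⟩ := exists_int_prod_equiv_s17 hA (by rwa [compl_compl])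
  have hσB : ∀ y, σ y ∈ Bᶜ ↔ y ∈ Bᶜ := by
    intro y
    by_cases hy : y ∈ B
    · have : σ y = y := hBfix hy
      simp [hy, this]
    · refine iff_of_true (fun hσy => hy ?_) hy
      rwa [← σ.injective (hBfix hσy : σ (σ y) = σ y)]
  have hσΛ : σ = Λ.permCongr (prodExtendRight 0 (σ.subtypePerm hσB)) := by
    ext y
    obtain ⟨⟨k, a⟩, rfl⟩ := Λ.surjective y
    rw [permCongr_apply, symm_apply_apply]
    by_cases hk : k = 0
    · subst hk
      rw [prodExtendRight_apply_eq, hΛ₀, hΛ₀]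
      rfl
    · rw [prodExtendRight_apply_ne _ hk]
      exact hBfix (by simpa using hΛ k hk a)
  rw [hσΛ]
  exact prodExtendRight_zero_mem (.comap Λ.permCongrHom.toMonoidHom Φ) _

theorem exists_involutive_eqOn_of_disjoint (σ : Perm α) {X : Set α}
    (hX : _root_.Disjoint X (σ '' X)) :
    ∃ τ : Perm α, τ * τ = 1 ∧ (∀ x ∈ X, τ x = σ x) ∧ ∀ x ∉ X, x ∉ σ '' X → τ x = x := by
  classical
  have hσX : ∀ x ∈ X, σ x ∉ X := fun x hx hσx => hX.ne_of_mem hσx ⟨x, hx, rfl⟩ rfl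
  let g : α → α := fun x => if x ∈ X then σ x else if x ∈ σ '' X then σ⁻¹ x else x
  have hg : Function.Involutive g := by
    intro x
    by_cases hx : x ∈ X
    · simp [g, hx, hσX x hx]
    · by_cases hx' : x ∈ σ '' X
      · obtain ⟨y, hy, rfl⟩ := hx'
        simp [g, hy, hσX y hy]
      · have : g x = x := by simp only [g, if_neg hx, if_neg hx']
        rw [this, this]
  refine ⟨hg.toPerm, Equiv.ext hg, fun x hx => if_pos hx, fun x hx hx' => ?_⟩
  exact (if_neg hx).trans (if_neg hx')

theorem exists_injective_ne_apply {σ : Perm α} (hσ : {x | σ x ≠ x}.Infinite) :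
    ∃ f : ℕ → α, Function.Injective f ∧ ∀ a b, f a ≠ σ (f b) := by
  obtain ⟨f, hfσ, hf⟩ := exists_seq_of_forall_finset_exists (fun x => σ x ≠ x)
    (fun x y => x ≠ y ∧ x ≠ σ y ∧ y ≠ σ x) fun s _ => by
      have hfin : ((s : Set α) ∪ σ '' s ∪ σ.symm '' s).Finite :=
        (s.finite_toSet.union (s.finite_toSet.image _)).union (s.finite_toSet.image _)
      obtain ⟨y, hy, hys⟩ := (hσ.sdiff hfin).nonempty
      simp only [Set.mem_union, Set.mem_image, Finset.mem_coe, not_or, not_exists,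
        not_and] at hys
      refine ⟨y, hy, fun x hx => ⟨fun h => hys.1.1 (h ▸ hx), fun h => hys.2 x hx ?_,
        fun h => hys.1.2 x hx h.symm⟩⟩
      rw [h, symm_apply_apply]
  refine ⟨f, fun m n h => ?_, fun a b h => ?_⟩
  · by_contra hmn
    rcases lt_or_gt_of_ne hmn with hlt | hlt
    · exact (hf m n hlt).1 h
    · exact (hf n m hlt).1 h.symm
  · rcases lt_trichotomy a b with hlt | rfl | hlt
    · exact (hf a b hlt).2.1 h
    · exact hfσ a h.symm
    · exact (hf b a hlt).2.2 h

theorem exists_mul_eq_infinite_fixedPoints [Infinite α] (σ : Perm α) :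
    ∃ σ₁ σ₂ : Perm α, σ₁ * σ₂ = σ ∧ {x | σ₁ x = x}.Infinite ∧ {x | σ₂ x = x}.Infinite := by
  by_cases hfix : {x | σ x = x}.Infinite
  · exact ⟨σ, 1, mul_one σ, hfix, by simpa using Set.infinite_univ⟩
  obtain ⟨f, hf, hfσ⟩ := exists_injective_ne_apply (Set.not_infinite.1 hfix).infinite_compl
  set X := Set.range fun m => f (2 * m)
  have hX : _root_.Disjoint X (σ '' X) := by
    refine Set.disjoint_left.2 ?_
    rintro _ ⟨a, rfl⟩ ⟨_, ⟨b, rfl⟩, h⟩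
    exact hfσ _ _ h.symm
  have hXinf : X.Infinite :=
    Set.infinite_range_of_injective (hf.comp fun a b h => by simpa using h)
  -- `τ` swaps each `x ∈ X` with `σ x`: then `σ * τ` fixes `σ '' X`, and `τ` fixes `f (2m+1)`.
  obtain ⟨τ, hτ, hτX, hτfix⟩ := exists_involutive_eqOn_of_disjoint σ hX
  refine ⟨σ * τ, τ, by rw [mul_assoc, hτ, mul_one], ?_, ?_⟩
  · refine (hXinf.image σ.injective.injOn).mono ?_
    rintro _ ⟨x, hx, rfl⟩
    have : τ (σ x) = x := by rw [← hτX x hx, ← Perm.mul_apply, hτ, one_apply]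
    simp [Perm.mul_apply, this]
  · refine (Set.infinite_range_of_injective (hf.comp fun a b h => by simpa using h) :
      (Set.range fun m => f (2 * m + 1)).Infinite).mono ?_
    rintro _ ⟨m, rfl⟩
    refine hτfix _ (fun ⟨a, ha⟩ => ?_) fun ⟨_, ⟨a, rfl⟩, h⟩ => hfσ _ _ h.symm
    have := hf ha
    omega

end Equiv.Perm

def NoProperFiniteIndexNormalSubgroup (G : Type*) [Group G] : Prop :=
  ∀ Φ : FiniteIndexNormalSubgroup G, (Φ : Subgroup G) = ⊤

namespace NoProperFiniteIndexNormalSubgroup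

variable {G K : Type*} [Group G] [Group K]

theorem map_mem (hG : NoProperFiniteIndexNormalSubgroup G) (f : G →* K)
    (Φ : FiniteIndexNormalSubgroup K) (g : G) : f g ∈ Φ := by
  exact (SetLike.ext_iff.1 (hG (.comap f Φ)) g).2 (Subgroup.mem_top g)

theorem pi {ι : Type*} [Finite ι] {G : ι → Type*} [∀ i, Group (G i)]
    (hG : ∀ i, NoProperFiniteIndexNormalSubgroup (G i)) :
    NoProperFiniteIndexNormalSubgroup (∀ i, G i) := by
  classical
  intro Φ
  rw [eq_top_iff, ← Subgroup.pi_top Set.univ, Subgroup.pi_le_iff]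
  rintro i _ ⟨g, -, rfl⟩
  exact (hG i).map_mem (MonoidHom.mulSingle G i) Φ g

theorem perm {Y : Type*} [Countable Y] [Infinite Y] :
    NoProperFiniteIndexNormalSubgroup (Perm Y) := by
  intro Φ
  refine eq_top_iff.2 fun σ _ => ?_
  obtain ⟨σ₁, σ₂, rfl, h₁, h₂⟩ := σ.exists_mul_eq_infinite_fixedPoints
  exact Φ.mul_mem (Perm.mem_of_infinite_fixedPoints Φ h₁)
    (Perm.mem_of_infinite_fixedPoints Φ h₂)

end NoProperFiniteIndexNormalSubgroup

namespace ProdWreath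

variable {n : ℕ} {α : Fin n → Type*} (H : ∀ j, Subgroup (Perm (α j)))

def top : (Fin n → Perm ℕ) →* Perm (Σ j, α j × ℕ) where
  toFun σ := sigmaCongrRight fun j => prodCongr (Equiv.refl (α j)) (σ j)
  map_one' := rfl
  map_mul' _ _ := rfl

def base : (ℕ → ∀ j, H j) →* Perm (Σ j, α j × ℕ) where
  toFun v := sigmaCongrRight fun j => prodCongrLeft fun i => (v i j : Perm (α j))
  map_one' := rfl
  map_mul' _ _ := rfl

@[simp]
theorem top_apply (σ : Fin n → Perm ℕ) (j : Fin n) (a : α j) (i : ℕ) :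
    top σ ⟨j, (a, i)⟩ = ⟨j, (a, σ j i)⟩ := rfl

@[simp]
theorem base_apply (v : ℕ → ∀ j, H j) (j : Fin n) (a : α j) (i : ℕ) :
    base H v ⟨j, (a, i)⟩ = ⟨j, ((v i j : Perm (α j)) a, i)⟩ := rfl

theorem top_mem (σ : Fin n → Perm ℕ) : top σ ∈ prodWreath H :=
  fun j => ⟨σ j, 1, fun _ => (H j).one_mem, fun _ _ => rfl⟩

theorem base_mem (v : ℕ → ∀ j, H j) : base H v ∈ prodWreath H :=
  fun j => ⟨1, fun i => v i j, fun i => (v i j).2, fun _ _ => rfl⟩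

theorem exists_eq_top_mul_base {g : Perm (Σ j, α j × ℕ)} (hg : g ∈ prodWreath H) :
    ∃ σ v, g = top σ * base H v := by
  choose σ h hH hgj using hg
  refine ⟨σ, fun i j => ⟨h j i, hH j i⟩, Equiv.ext ?_⟩
  rintro ⟨j, a, i⟩
  exact hgj j a i

theorem top_mul_base_mul_inv (π : Perm ℕ) (v : ℕ → ∀ j, H j) :
    top (fun _ => π) * base H v * (top fun _ => π)⁻¹ = base H fun i => v (π⁻¹ i) := by
  rw [mul_inv_eq_iff_eq_mul]
  ext ⟨j, a, i⟩ <;> simp [Perm.mul_apply]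

variable {H} {N : Subgroup (Perm (Σ j, α j × ℕ))}

theorem base_mem_of_top_mem (hnormal : ∀ k ∈ prodWreath H, ∀ x ∈ N, k * x * k⁻¹ ∈ N)
    (htop : ∀ σ, top σ ∈ N) (v : ℕ → ∀ j, H j) : base H v ∈ N := by
  have hcomm : ∀ (u : ℕ → ∀ j, H j) (π : Perm ℕ),
      base H (fun i => u i * (u (π⁻¹ i))⁻¹) ∈ N := by
    intro u π
    -- this base element is the commutator of `base H u` with `top fun _ => π`
    have hπ := htop fun _ => π
    have h := N.mul_mem (hnormal _ (base_mem H u) _ hπ) (N.inv_mem hπ)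
    simp only [mul_assoc] at h
    rwa [← mul_assoc (top _), ← map_inv, top_mul_base_mul_inv, ← map_mul] at h
  have hodd : {i : ℕ | Even i}ᶜ.Infinite :=
    Set.infinite_of_forall_exists_gt fun a => ⟨2 * a + 1, by simp [parity_simps], by omega⟩
  have heven : {i : ℕ | Even i}.Infinite :=
    Set.infinite_of_forall_exists_gt fun a => ⟨2 * a + 2, by simp [parity_simps], by omega⟩
  obtain ⟨u₁, π₁, h₁⟩ := exists_mulIndicator_eq_mul_inv_comp heven hodd v
  obtain ⟨u₂, π₂, h₂⟩ := exists_mulIndicator_eq_mul_inv_comp hodd (by rwa [compl_compl]) v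
  rw [← Set.mulIndicator_self_mul_compl {i | Even i} v, map_mul, h₁, h₂]
  exact N.mul_mem (hcomm u₁ π₁) (hcomm u₂ π₂)

end ProdWreath

theorem prodWreath_no_proper_finite_index_normal_subgroup_general
    (n : ℕ) (α : Fin n → Type*)
    (H : ∀ j, Subgroup (Equiv.Perm (α j)))
    (N : Subgroup (Equiv.Perm (Σ j, α j × ℕ)))
    (hle : N ≤ prodWreath H)
    (hnormal : ∀ k ∈ prodWreath H, ∀ x ∈ N, k * x * k⁻¹ ∈ N)
    (hindex : (N.subgroupOf (prodWreath H)).index ≠ 0) :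
    N = prodWreath H := by
  let Φ : FiniteIndexNormalSubgroup (prodWreath H) :=
    { toSubgroup := N.subgroupOf (prodWreath H)
      isNormal' := ⟨fun x hx k => hnormal k k.2 x hx⟩
      isFiniteIndex' := ⟨hindex⟩ }
  have htop : ∀ σ, ProdWreath.top σ ∈ N := fun σ =>
    (NoProperFiniteIndexNormalSubgroup.pi fun _ => .perm).map_mem
      (ProdWreath.top.codRestrict _ (ProdWreath.top_mem H)) Φ σ
  refine le_antisymm hle fun g hg => ?_
  obtain ⟨σ, v, rfl⟩ := ProdWreath.exists_eq_top_mul_base H hg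
  exact N.mul_mem (htop σ) (ProdWreath.base_mem_of_top_mem hnormal htop v)

/-- The direct product `K = ∏_j (H_j ≀ Sym(ℕ))` of wreath products of finite
groups with `Sym(ℕ)`, each factor acting on its own summand `α j × ℕ`, admits
no proper normal subgroup of finite index. -/
theorem prodWreath_no_proper_finite_index_normal_subgroup
    (n : ℕ) (α : Fin n → Type*) [∀ j, Finite (α j)] [∀ j, Nonempty (α j)]
    (H : ∀ j, Subgroup (Equiv.Perm (α j)))
    (N : Subgroup (Equiv.Perm (Σ j, α j × ℕ)))
    (hle : N ≤ prodWreath H)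
    (hnormal : ∀ k ∈ prodWreath H, ∀ x ∈ N, k * x * k⁻¹ ∈ N)
    (hindex : (N.subgroupOf (prodWreath H)).index ≠ 0) :
    N = prodWreath H :=
  prodWreath_no_proper_finite_index_normal_subgroup_general n α H N hle hnormal hindex
end
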